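/- arXiv:1811.04398 — 6 statements merged into one kernel-verified Lean document; each statement's English description precedes it below -/
import Mathlib

section
/- Let K be a simplicial complex on [m], α = {α₁,…,α_r} a nondegenerate partition for K, and σ = {j₀,…,j_d} a maximal face of K with d = dim(K), where j_l ∈ α_{i_l}. Then under the k[u₁,…,u_r]-module structure on k(K) given by u_i ↦ Σ_{j∈α_i} v_j, the images of u_{i₀},…,u_{i_d} in k[u₁,…,u_r]/Ann(k(K)) are algebraically independent over k. -/
/-!
Killing the variables outside the face `σ` kills every non-face monomial, so it induces a
`k`-algebra map `k(K) → k[σ]`. Because `σ` meets each block in exactly one vertex, the composite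
`k[u] → k(K) → k[σ]` sends `u_{c(j)}` to `v_j` for `j ∈ σ`. The annihilator of `k(K)` is the
kernel of `k[u] → k(K)`, so this composite factors through `k[u]/Ann(k(K))` and maps the images
of `u_{i₀},…,u_{i_d}` to the independent variables `v_{j₀},…,v_{j_d}`.
-/

open Finset

/-- An abstract simplicial complex on the vertex set `Fin m`. -/
structure SimplicialComplexOn (m : ℕ) where
  faces : Set (Finset (Fin m))
  down_closed : ∀ σ ∈ faces, ∀ τ ⊆ σ, τ ∈ faces
  empty_mem : (∅ : Finset (Fin m)) ∈ faces
  singleton_mem : ∀ j : Fin m, {j} ∈ faces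

/-- `dim K + 1`, i.e. the maximal cardinality of a face of `K`. -/
noncomputable def SimplicialComplexOn.dimAdd1 {m : ℕ} (K : SimplicialComplexOn m) : ℕ :=
  sSup {n : ℕ | ∃ σ ∈ K.faces, σ.card = n}

/-- A partition of `[m]`, encoded as a coloring `c : Fin m → Fin r`
(the block `α_i` being the fiber `c ⁻¹ {i}`), is nondegenerate for `K` if every
face of `K` meets each block in at most one vertex; equivalently, the two
vertices of any 1-simplex of `K` lie in different blocks. -/
def IsNondegenerate {m r : ℕ} (K : SimplicialComplexOn m) (c : Fin m → Fin r) : Prop :=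
  ∀ σ ∈ K.faces, ∀ j ∈ σ, ∀ j' ∈ σ, c j = c j' → j = j'

open MvPolynomial in
/-- The Stanley–Reisner ideal of `K`: the ideal of `k[v₁,…,v_m]` generated by
the squarefree monomials `v^τ = ∏_{j∈τ} v_j` over the non-faces `τ ∉ K`. -/
noncomputable def SRideal {m : ℕ} (K : SimplicialComplexOn m) (k : Type*) [Field k] :
    Ideal (MvPolynomial (Fin m) k) :=
  Ideal.span {p | ∃ τ : Finset (Fin m), τ ∉ K.faces ∧ p = ∏ j ∈ τ, (X j : MvPolynomial (Fin m) k)}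

/-- The Stanley–Reisner ring `k(K) = k[v₁,…,v_m]/I_K`. -/
abbrev SRring {m : ℕ} (K : SimplicialComplexOn m) (k : Type*) [Field k] :=
  MvPolynomial (Fin m) k ⧸ SRideal K k

open MvPolynomial in
/-- The `k`-algebra map `k[u₁,…,u_r] → k(K)`, `u_i ↦ Σ_{j ∈ α_i} v_j`,
inducing the `k[u₁,…,u_r]`-module structure on `k(K)` determined by the
partition encoded by the coloring `c`. -/
noncomputable def srAlgHom {m r : ℕ} (K : SimplicialComplexOn m) (k : Type*) [Field k]
    (c : Fin m → Fin r) : MvPolynomial (Fin r) k →ₐ[k] SRring K k :=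
  aeval (fun i : Fin r =>
    Ideal.Quotient.mk (SRideal K k)
      (∑ j ∈ Finset.univ.filter (fun j => c j = i), (X j : MvPolynomial (Fin m) k)))

open MvPolynomial

theorem Module.annihilator_compHom_eq_ker {R S : Type*} [CommRing R] [CommRing S]
    (f : R →+* S) :
    @Module.annihilator R S _ _ (Module.compHom S f) = RingHom.ker f := by
  let _ := Module.compHom S f
  have smul_eq (p : R) (s : S) : p • s = f p * s := rfl
  ext p
  simp only [Module.mem_annihilator, RingHom.mem_ker, smul_eq]
  exact ⟨fun hp => by simpa using hp 1, fun hp s => by rw [hp, zero_mul]⟩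

theorem AlgebraicIndependent.mk_ker_of_comp {ι R A B : Type*} [CommRing R] [CommRing A]
    [CommRing B] [Algebra R A] [Algebra R B] (f : A →ₐ[R] B) {x : ι → A}
    (hx : AlgebraicIndependent R (f ∘ x)) :
    AlgebraicIndependent R (Ideal.Quotient.mk (RingHom.ker f) ∘ x) :=
  .of_comp (Ideal.kerLiftAlg f) hx

section FaceRestriction

variable {m : ℕ} (k : Type*) [Field k]

noncomputable def faceRestriction (σ : Finset (Fin m)) :
    MvPolynomial (Fin m) k →ₐ[k] MvPolynomial σ k :=
  aeval fun j => if h : j ∈ σ then X ⟨j, h⟩ else 0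

theorem faceRestriction_X_of_notMem {σ : Finset (Fin m)} {j : Fin m} (hj : j ∉ σ) :
    faceRestriction k σ (X j) = 0 := by
  simp [faceRestriction, hj]

theorem faceRestriction_X_of_mem {σ : Finset (Fin m)} {j : Fin m} (hj : j ∈ σ) :
    faceRestriction k σ (X j) = X ⟨j, hj⟩ := by
  simp [faceRestriction, hj]

theorem SRideal_le_ker_faceRestriction (K : SimplicialComplexOn m) {σ : Finset (Fin m)}
    (hσ : σ ∈ K.faces) : SRideal K k ≤ RingHom.ker (faceRestriction k σ) := by
  rw [SRideal, Ideal.span_le]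
  rintro _ ⟨τ, hτ, rfl⟩
  obtain ⟨j, hjτ, hjσ⟩ := Finset.not_subset.mp fun hsub => hτ (K.down_closed σ hσ τ hsub)
  rw [SetLike.mem_coe, RingHom.mem_ker, map_prod]
  exact Finset.prod_eq_zero hjτ (faceRestriction_X_of_notMem k hjσ)

noncomputable def SRring.restrictToFace (K : SimplicialComplexOn m) {σ : Finset (Fin m)}
    (hσ : σ ∈ K.faces) : SRring K k →ₐ[k] MvPolynomial σ k :=
  Ideal.Quotient.liftₐ (SRideal K k) (faceRestriction k σ)
    fun _ hp => RingHom.mem_ker.mp (SRideal_le_ker_faceRestriction k K hσ hp)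

theorem SRring.restrictToFace_mk (K : SimplicialComplexOn m) {σ : Finset (Fin m)}
    (hσ : σ ∈ K.faces) (p : MvPolynomial (Fin m) k) :
    SRring.restrictToFace k K hσ (Ideal.Quotient.mk _ p) = faceRestriction k σ p :=
  rfl

/-- By nondegeneracy, `j` is the only vertex of `σ` in its block. -/
theorem SRring.restrictToFace_srAlgHom_X {r : ℕ} {K : SimplicialComplexOn m}
    {c : Fin m → Fin r} (hnd : IsNondegenerate K c) {σ : Finset (Fin m)} (hσ : σ ∈ K.faces)
    {j : Fin m} (hj : j ∈ σ) :
    SRring.restrictToFace k K hσ (srAlgHom K k c (X (c j))) = X ⟨j, hj⟩ := by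
  rw [srAlgHom, aeval_X, SRring.restrictToFace_mk, map_sum,
    Finset.sum_eq_single_of_mem j (by simp), faceRestriction_X_of_mem k hj]
  intro j' hj' hne
  by_cases hj'σ : j' ∈ σ
  · exact absurd (hnd σ hσ j' hj'σ j hj (Finset.mem_filter.mp hj').2) hne
  · exact faceRestriction_X_of_notMem k hj'σ

end FaceRestriction

open MvPolynomial in
theorem algebraicIndependent_in_quotient_by_annihilator_general {m r d : ℕ}
    (K : SimplicialComplexOn m) (k : Type*) [Field k]
    (c : Fin m → Fin r) (hnd : IsNondegenerate K c)
    (σ : Finset (Fin m)) (hσ : σ ∈ K.faces)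
    (v : Fin (d + 1) → Fin m) (hv : Function.Injective v)
    (hvσ : Finset.image v Finset.univ = σ) :
    AlgebraicIndependent k
      (fun l : Fin (d + 1) =>
        Ideal.Quotient.mk
          (@Module.annihilator (MvPolynomial (Fin r) k) (SRring K k) _ _
            (Module.compHom (SRring K k) (srAlgHom K k c).toRingHom))
          (X (c (v l)) : MvPolynomial (Fin r) k)) := by
  have hvσ' (l : Fin (d + 1)) : v l ∈ σ := hvσ ▸ Finset.mem_image_of_mem v (Finset.mem_univ l)
  rw [Module.annihilator_compHom_eq_ker]
  refine AlgebraicIndependent.mk_ker_of_comp (srAlgHom K k c) (x := fun l => X (c (v l))) ?_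
  refine .of_comp (SRring.restrictToFace k K hσ) ?_
  have hcomp : SRring.restrictToFace k K hσ ∘ srAlgHom K k c ∘ (fun l => X (c (v l))) =
      (X : σ → MvPolynomial σ k) ∘ fun l => ⟨v l, hvσ' l⟩ :=
    funext fun l => SRring.restrictToFace_srAlgHom_X k hnd hσ (hvσ' l)
  rw [hcomp]
  exact (algebraicIndependent_X σ k).comp _ fun l l' h => hv (congrArg Subtype.val h)

set_option synthInstance.maxHeartbeats 1000000 in
open MvPolynomial in
/-- Let `σ = {j₀,…,j_d}` be a maximal face of `K` with `d = dim K`, where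
`j_l` lies in the block `α_{i_l}` (so `i_l = c (j_l)`). Under the
`k[u₁,…,u_r]`-module structure `u_i ↦ Σ_{j∈α_i} v_j` on `k(K)` given by a
nondegenerate partition, the images of `u_{i₀},…,u_{i_d}` in
`k[u₁,…,u_r]/Ann(k(K))` are algebraically independent over `k`. -/
theorem algebraicIndependent_in_quotient_by_annihilator {m r d : ℕ}
    (K : SimplicialComplexOn m) (k : Type*) [Field k]
    (c : Fin m → Fin r) (hc : Function.Surjective c) (hnd : IsNondegenerate K c)
    (σ : Finset (Fin m)) (hσ : σ ∈ K.faces)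
    (hmax : ∀ τ ∈ K.faces, σ ⊆ τ → τ = σ)
    (hdim : K.dimAdd1 = d + 1) (hcard : σ.card = d + 1)
    (v : Fin (d + 1) → Fin m) (hv : Function.Injective v)
    (hvσ : Finset.image v Finset.univ = σ) :
    AlgebraicIndependent k
      (fun l : Fin (d + 1) =>
        Ideal.Quotient.mk
          (@Module.annihilator (MvPolynomial (Fin r) k) (SRring K k) _ _
            (Module.compHom (SRring K k) (srAlgHom K k c).toRingHom))
          (X (c (v l)) : MvPolynomial (Fin r) k)) :=
  algebraicIndependent_in_quotient_by_annihilator_general K k c hnd σ hσ v hv hvσ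
end

section
/- Let K be a simplicial complex on [m] and α a partition of [m] into r blocks. The canonical action of the subtorus S_α ⊆ T^m on the moment-angle complex Z_K is free if and only if α is nondegenerate for K. Here S_α is the subtorus corresponding to the subgroup of Z^m generated by {e_j − e_{j′} : j, j′ belong to the same block of α}. -/
open Finset

/-- The moment-angle complex `Z_K ⊆ (D²)^m`: points `z ∈ ℂ^m` with all
`|z_j| ≤ 1` such that the set of coordinates with `|z_j| < 1` is contained in
some face of `K`. -/
def momentAngleComplex {m : ℕ} (K : SimplicialComplexOn m) : Set (Fin m → ℂ) :=
  {z | ∃ σ ∈ K.faces, (∀ j, ‖z j‖ ≤ 1) ∧ ∀ j, j ∉ σ → ‖z j‖ = 1}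

/-- Membership in the subtorus `S_α ⊆ T^m` corresponding to the subgroup of
`ℤ^m` generated by the differences `e_j − e_{j'}` for `j, j'` in the same block
of the partition `α` (encoded by the coloring `c`): it consists exactly of
those `t ∈ T^m` whose coordinates multiply to `1` over each block. -/
def memSubtorus {m r : ℕ} (c : Fin m → Fin r) (t : Fin m → Circle) : Prop :=
  ∀ i : Fin r, ∏ j ∈ Finset.univ.filter (fun j => c j = i), t j = 1

/-!
A point `z ∈ Z_K` has its zero coordinates inside a face, and `t ∈ T^m` fixes `z` iff `t_j = 1`
wherever `z_j ≠ 0`. If `α` is nondegenerate, each block contains at most one zero coordinate of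
`z`, so the block-product condition defining `S_α` forces the remaining `t_j` to be `1` as well.
Conversely, two vertices `j ≠ j'` of a face in the same block give the fixed point with zeros
exactly at `j, j'`, stabilised by the nontrivial element of `S_α` that is `-1` at `j, j'`.
-/

namespace Circle

lemma eq_one_of_mul_eq_self {t : Circle} {z : ℂ} (hz : z ≠ 0) (h : (t : ℂ) * z = z) : t = 1 :=
  Circle.coe_eq_one.mp (mul_right_cancel₀ hz (h.trans (one_mul z).symm))

lemma neg_one_ne_one : (-1 : Circle) ≠ 1 := by
  intro h
  have := congrArg ((↑) : Circle → ℂ) h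
  norm_num at this

end Circle

section

variable {m r : ℕ} {K : SimplicialComplexOn m}

lemma exists_face_of_mem_momentAngleComplex {z : Fin m → ℂ} (hz : z ∈ momentAngleComplex K) :
    ∃ σ ∈ K.faces, ∀ j, z j = 0 → j ∈ σ := by
  obtain ⟨σ, hσ, -, hunit⟩ := hz
  refine ⟨σ, hσ, fun j hj => ?_⟩
  by_contra hjσ
  simpa [hj] using hunit j hjσ

lemma ite_mem_momentAngleComplex {σ : Finset (Fin m)} (hσ : σ ∈ K.faces) :
    (fun k => if k ∈ σ then (0 : ℂ) else 1) ∈ momentAngleComplex K :=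
  ⟨σ, hσ, fun k => by dsimp only; split_ifs <;> simp, fun k hk => by simp [hk]⟩

lemma memSubtorus_neg_one_on_pair {c : Fin m → Fin r} {j j' : Fin m} (hne : j ≠ j')
    (hc : c j = c j') :
    memSubtorus c (fun k => if k ∈ ({j, j'} : Finset (Fin m)) then -1 else 1) := by
  intro i
  rw [prod_ite_mem, prod_const]
  by_cases hi : c j = i
  · have hpair : univ.filter (fun k => c k = i) ∩ {j, j'} = {j, j'} :=
      inter_eq_right.mpr (by simp [insert_subset_iff, hi, ← hc])
    rw [hpair, card_pair hne]
    simp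
  · have hempty : univ.filter (fun k => c k = i) ∩ {j, j'} = ∅ := by
      ext k
      simp only [mem_inter, mem_filter, mem_univ, true_and, mem_insert, mem_singleton,
        notMem_empty, iff_false, not_and]
      rintro rfl (rfl | rfl) <;> simp_all
    simp [hempty]

variable {c : Fin m → Fin r}

lemma eq_one_of_memSubtorus_of_fixed (hnd : IsNondegenerate K c) {t : Fin m → Circle}
    (ht : memSubtorus c t) {z : Fin m → ℂ} (hz : z ∈ momentAngleComplex K)
    (hfix : (fun j => (t j : ℂ) * z j) = z) : t = 1 := by
  have hone : ∀ k, z k ≠ 0 → t k = 1 := fun k hk =>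
    Circle.eq_one_of_mul_eq_self hk (congrFun hfix k)
  obtain ⟨σ, hσ, hzero⟩ := exists_face_of_mem_momentAngleComplex hz
  funext k
  by_cases hk : z k = 0
  · -- `k` is the only zero coordinate of `z` in its block
    have hblock := ht (c k)
    rwa [prod_eq_single k (fun b hb hbk => hone b fun hzb => hbk ?_) (by simp)] at hblock
    exact hnd σ hσ b (hzero b hzb) k (hzero k hk) (mem_filter.mp hb).2
  · exact hone k hk

lemma isNondegenerate_of_free
    (hfree : ∀ t : Fin m → Circle, memSubtorus c t →
      ∀ z ∈ momentAngleComplex K, (fun j => (t j : ℂ) * z j) = z → t = 1) :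
    IsNondegenerate K c := by
  intro σ hσ j hj j' hj' hc
  by_contra hne
  have hpair : ({j, j'} : Finset (Fin m)) ∈ K.faces :=
    K.down_closed σ hσ _ (by simp [insert_subset_iff, hj, hj'])
  have hfix := hfree _ (memSubtorus_neg_one_on_pair hne hc) _ (ite_mem_momentAngleComplex hpair)
    (funext fun k => by split_ifs <;> simp)
  exact Circle.neg_one_ne_one (by simpa using congrFun hfix j)

end

theorem subtorus_action_free_iff_nondegenerate_general {m r : ℕ}
    (K : SimplicialComplexOn m) (c : Fin m → Fin r) :
    (∀ t : Fin m → Circle, memSubtorus c t →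
        ∀ z ∈ momentAngleComplex K, (fun j => (t j : ℂ) * z j) = z → t = 1) ↔
      IsNondegenerate K c :=
  ⟨isNondegenerate_of_free, fun hnd _ ht _ hz hfix => eq_one_of_memSubtorus_of_fixed hnd ht hz hfix⟩

/-- The canonical action of the subtorus `S_α ⊆ T^m` on the moment-angle
complex `Z_K` is free if and only if the partition `α` is nondegenerate
for `K`. -/
theorem subtorus_action_free_iff_nondegenerate {m r : ℕ}
    (K : SimplicialComplexOn m) (c : Fin m → Fin r) (hc : Function.Surjective c) :
    (∀ t : Fin m → Circle, memSubtorus c t →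
        ∀ z ∈ momentAngleComplex K, (fun j => (t j : ℂ) * z j) = z → t = 1) ↔
      IsNondegenerate K c :=
  subtorus_action_free_iff_nondegenerate_general K c
end

section
/- Let K be a simplicial complex on [m], k a field, and α a partition of [m] into r blocks that is nondegenerate for K. Then Σ_{L⊆[r]} Σ_{j} dim_k H̃^{j}(K|_{ω_L}; k) ≥ 2^{r − dim(K) − 1}, where the inner sum of reduced Betti numbers ranges over all degrees j ≥ −1 and ω_L = ⋃_{i∈L} α_i. -/
open Finset

/-- For a coloring `c : Fin m → Fin r` encoding the partition `α` and a set of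
colors `L ⊆ [r]`, `omegaOf c L = ω_L = ⋃_{i ∈ L} α_i ⊆ [m]`. -/
def omegaOf {m r : ℕ} (c : Fin m → Fin r) (L : Finset (Fin r)) : Finset (Fin m) :=
  Finset.univ.filter (fun j => c j ∈ L)

open Classical in
/-- The reduced simplicial cochain group in degree `j ∈ ℤ` of the full
subcomplex `K|_ω` with coefficients in `k`: functions on the faces of `K`
contained in `ω` having `j + 1` vertices.  (In degree `j = -1` this is spanned
by the empty face, giving the convention `H̃^{-1}(∅; k) = k`; in degrees
`j < -1` it is the zero module.) -/
abbrev redCochain {m : ℕ} (K : SimplicialComplexOn m) (ω : Finset (Fin m))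
    (k : Type*) [Field k] (j : ℤ) : Type _ :=
  {σ : Finset (Fin m) // σ ∈ K.faces ∧ σ ⊆ ω ∧ (σ.card : ℤ) = j + 1} → k

open Classical in
/-- The simplicial coboundary map `redCochain a → redCochain b` (which is the
usual coboundary `δ` when `b = a + 1`, and zero otherwise):
`(δ f)(σ) = Σ_{x ∈ σ} (−1)^{|{y ∈ σ : y < x}|} f(σ \ x)`. -/
noncomputable def redCoboundary {m : ℕ} (K : SimplicialComplexOn m)
    (ω : Finset (Fin m)) (k : Type*) [Field k] (a b : ℤ) :
    redCochain K ω k a →ₗ[k] redCochain K ω k b where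
  toFun f := fun σ => ∑ x ∈ σ.1.attach,
    if h : σ.1.erase x.1 ∈ K.faces ∧ σ.1.erase x.1 ⊆ ω ∧
        (((σ.1.erase x.1).card : ℤ) = a + 1) then
      ((-1 : k) ^ (σ.1.filter (fun y => y < x.1)).card) * f ⟨σ.1.erase x.1, h⟩
    else 0
  map_add' f g := by
    funext σ
    simp only [Pi.add_apply]
    rw [← Finset.sum_add_distrib]
    refine Finset.sum_congr rfl fun x _ => ?_
    split
    · simp [mul_add]
    · simp
  map_smul' a f := by
    funext σ
    simp only [Pi.smul_apply, RingHom.id_apply, smul_eq_mul, Finset.mul_sum]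
    refine Finset.sum_congr rfl fun x _ => ?_
    split
    · simp [mul_left_comm]
    · simp

/-- The reduced simplicial cohomology `H̃^j(K|_ω; k)` of the full subcomplex
`K|_ω`, as the cohomology of the reduced cochain complex at degree `j`. -/
noncomputable def redCohomology {m : ℕ} (K : SimplicialComplexOn m)
    (ω : Finset (Fin m)) (k : Type*) [Field k] (j : ℤ) : Type _ :=
  ↥(LinearMap.ker (redCoboundary K ω k j (j + 1))) ⧸
    Submodule.comap (LinearMap.ker (redCoboundary K ω k j (j + 1))).subtype
      (Submodule.map (redCoboundary K ω k (j - 1) j) ⊤)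

noncomputable instance {m : ℕ} (K : SimplicialComplexOn m) (ω : Finset (Fin m))
    (k : Type*) [Field k] (j : ℤ) : AddCommGroup (redCohomology K ω k j) :=
  Submodule.Quotient.addCommGroup _

noncomputable instance {m : ℕ} (K : SimplicialComplexOn m) (ω : Finset (Fin m))
    (k : Type*) [Field k] (j : ℤ) : Module k (redCohomology K ω k j) :=
  Submodule.Quotient.module _

/-- The reduced Betti number `dim_k H̃^j(K|_ω; k)`. -/
noncomputable def redBetti {m : ℕ} (K : SimplicialComplexOn m) (ω : Finset (Fin m))
    (k : Type*) [Field k] (j : ℤ) : ℕ :=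
  Module.finrank k (redCohomology K ω k j)

set_option maxHeartbeats 1000000
set_option synthInstance.maxHeartbeats 400000

open Module LinearMap

section DD

variable {m : ℕ} (K : SimplicialComplexOn m) (ω : Finset (Fin m)) (k : Type*) [Field k]

open Classical in
lemma redCoboundary_apply (a b : ℤ) (f : redCochain K ω k a)
    (σ : {σ : Finset (Fin m) // σ ∈ K.faces ∧ σ ⊆ ω ∧ (σ.card : ℤ) = b + 1}) :
    redCoboundary K ω k a b f σ = ∑ x ∈ σ.1.attach,
      if h : σ.1.erase x.1 ∈ K.faces ∧ σ.1.erase x.1 ⊆ ω ∧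
          (((σ.1.erase x.1).card : ℤ) = a + 1) then
        ((-1 : k) ^ (σ.1.filter (fun y => y < x.1)).card) * f ⟨σ.1.erase x.1, h⟩
      else 0 := rfl

lemma filter_lt_erase (σ : Finset (Fin m)) (x z : Fin m) :
    (σ.erase x).filter (fun y => y < z) = (σ.filter (fun y => y < z)).erase x := by
  ext w
  simp only [Finset.mem_filter, Finset.mem_erase]
  tauto

open Classical in
noncomputable def Fext (a : ℤ) (f : redCochain K ω k a) : Finset (Fin m) → k := fun τ =>
  if h : τ ∈ K.faces ∧ τ ⊆ ω ∧ ((τ.card : ℤ) = a + 1) then f ⟨τ, h⟩ else 0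

noncomputable def tTerm (a : ℤ) (f : redCochain K ω k a) (S : Finset (Fin m)) (x y : Fin m) : k :=
  if y ≠ x then
    ((-1:k) ^ (S.filter (fun z => z < x)).card) *
      (((-1:k) ^ ((S.erase x).filter (fun z => z < y)).card) *
        Fext K ω k a f ((S.erase x).erase y))
  else 0

lemma tTerm_eq (a : ℤ) (f : redCochain K ω k a) (S : Finset (Fin m)) {x y : Fin m}
    (hne : y ≠ x)
    (hc : (S.erase x).erase y ∈ K.faces ∧ (S.erase x).erase y ⊆ ω ∧
      ((((S.erase x).erase y).card : ℤ) = a + 1)) :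
    tTerm K ω k a f S x y =
      ((-1:k) ^ (S.filter (fun z => z < x)).card) *
        (((-1:k) ^ ((S.erase x).filter (fun z => z < y)).card) *
          f ⟨(S.erase x).erase y, hc⟩) := by
  rw [tTerm, if_pos hne, Fext, dif_pos hc]

lemma tTerm_diag (a : ℤ) (f : redCochain K ω k a) (S : Finset (Fin m)) (x : Fin m) :
    tTerm K ω k a f S x x = 0 := by
  rw [tTerm, if_neg (by simp)]

lemma tTerm_cancel (a : ℤ) (f : redCochain K ω k a) (S : Finset (Fin m)) (x y : Fin m)
    (hx : x ∈ S) (hy : y ∈ S) :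
    tTerm K ω k a f S x y + tTerm K ω k a f S y x = 0 := by
  have helper : ∀ u v : Fin m, u ∈ S → v ∈ S → u < v →
      tTerm K ω k a f S u v + tTerm K ω k a f S v u = 0 := by
    intro u v hu hv hlt
    have hne1 : v ≠ u := ne_of_gt hlt
    have hne2 : u ≠ v := ne_of_lt hlt
    have hE : (S.erase u).erase v = (S.erase v).erase u := Finset.erase_right_comm
    have c2 : ((S.erase u).filter (fun z => z < v)).card =
        (S.filter (fun z => z < v)).card - 1 := by
      rw [filter_lt_erase, Finset.card_erase_of_mem
        (s := S.filter fun z => z < v) (Finset.mem_filter.2 ⟨hu, hlt⟩)]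
    have c1 : ((S.erase v).filter (fun z => z < u)).card =
        (S.filter (fun z => z < u)).card := by
      rw [filter_lt_erase, Finset.erase_eq_of_notMem]
      simp only [Finset.mem_filter, not_and]
      intro _
      exact not_lt.2 hlt.le
    have pos2 : 1 ≤ (S.filter (fun z => z < v)).card :=
      Finset.card_pos.2 ⟨u, Finset.mem_filter.2 ⟨hu, hlt⟩⟩
    obtain ⟨n2, hn2⟩ : ∃ n2, (S.filter (fun z => z < v)).card = n2 + 1 :=
      ⟨_, (Nat.succ_pred_eq_of_pos pos2).symm⟩
    rw [tTerm, if_pos hne1, tTerm, if_pos hne2, c2, c1, hE, hn2]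
    simp only [Nat.add_sub_cancel]
    rw [pow_succ]
    ring
  rcases lt_trichotomy x y with h | h | h
  · exact helper x y hx hy h
  · subst h
    rw [tTerm_diag, add_zero]
  · rw [add_comm]
    exact helper y x hy hx h

lemma dd (a b c : ℤ) (f : redCochain K ω k a) :
    redCoboundary K ω k b c (redCoboundary K ω k a b f) = 0 := by
  funext σ
  rw [redCoboundary_apply, Pi.zero_apply]
  by_cases hcb : c = b + 1
  swap
  · apply Finset.sum_eq_zero
    intro x _
    rw [dif_neg]
    rintro ⟨-, -, hcard⟩
    rw [Finset.card_erase_of_mem x.2] at hcard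
    have h1 : 1 ≤ σ.1.card := Finset.card_pos.2 ⟨x.1, x.2⟩
    have h2 := σ.2.2.2
    omega
  subst hcb
  by_cases hba : b = a + 1
  swap
  · apply Finset.sum_eq_zero
    intro x _
    split
    · rename_i h
      rw [redCoboundary_apply, Finset.sum_eq_zero, mul_zero]
      intro y _
      rw [dif_neg]
      rintro ⟨-, -, hcard⟩
      have h2 : ((σ.1.erase x.1).card : ℤ) = b + 1 := h.2.2
      have hym : y.1 ∈ σ.1.erase x.1 := y.2
      have h1 : 1 ≤ (σ.1.erase x.1).card := Finset.card_pos.2 ⟨y.1, hym⟩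
      have hy : (((σ.1.erase x.1).erase y.1).card : ℤ) = ((σ.1.erase x.1).card : ℤ) - 1 := by
        rw [Finset.card_erase_of_mem hym]; omega
      rw [hy] at hcard
      omega
    · rfl
  subst hba
  classical
  have hSf := σ.2.1
  have hSω := σ.2.2.1
  have hScard : (σ.1.card : ℤ) = a + 1 + 1 + 1 := σ.2.2.2
  have hP : ∀ x ∈ σ.1, σ.1.erase x ∈ K.faces ∧ σ.1.erase x ⊆ ω ∧
      (((σ.1.erase x).card : ℤ) = (a + 1) + 1) := by
    intro x hx
    refine ⟨K.down_closed _ hSf _ (Finset.erase_subset _ _),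
      (Finset.erase_subset _ _).trans hSω, ?_⟩
    rw [Finset.card_erase_of_mem hx]
    have h1 : 1 ≤ σ.1.card := Finset.card_pos.2 ⟨x, hx⟩
    omega
  have hQ : ∀ x ∈ σ.1, ∀ y ∈ σ.1.erase x, (σ.1.erase x).erase y ∈ K.faces ∧
      (σ.1.erase x).erase y ⊆ ω ∧ ((((σ.1.erase x).erase y).card : ℤ) = a + 1) := by
    intro x hx y hy
    refine ⟨K.down_closed _ hSf _ ((Finset.erase_subset _ _).trans (Finset.erase_subset _ _)),
      ((Finset.erase_subset _ _).trans (Finset.erase_subset _ _)).trans hSω, ?_⟩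
    have h1 : 1 ≤ σ.1.card := Finset.card_pos.2 ⟨x, hx⟩
    have h2 : 1 ≤ (σ.1.erase x).card := Finset.card_pos.2 ⟨y, hy⟩
    rw [Finset.card_erase_of_mem hy, Finset.card_erase_of_mem hx]
    rw [Finset.card_erase_of_mem hx] at h2
    omega
  refine Eq.trans (Finset.sum_congr rfl fun x _ => ?_)
    (Eq.trans (Finset.sum_attach σ.1 (fun x => ∑ y ∈ σ.1, tTerm K ω k a f σ.1 x y)) ?_)
  · -- per x : dite term = ∑ y ∈ σ.1, tTerm ...
    rw [dif_pos (hP x.1 x.2), redCoboundary_apply, Finset.mul_sum]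
    refine Eq.trans (Finset.sum_congr rfl fun y _ => ?_) (Eq.trans
      (Finset.sum_attach (σ.1.erase x.1) (fun y => tTerm K ω k a f σ.1 x.1 y))
      (Finset.sum_erase _ (tTerm_diag K ω k a f σ.1 x.1)))
    · have hym : y.1 ∈ σ.1.erase x.1 := y.2
      rw [dif_pos (hQ x.1 x.2 y.1 hym)]
      rw [tTerm_eq K ω k a f σ.1 (Finset.ne_of_mem_erase hym) (hQ x.1 x.2 y.1 hym)]
  · -- ∑ x ∈ σ.1, ∑ y ∈ σ.1, tTerm = 0
    rw [← Finset.sum_product']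
    exact Finset.sum_involution (fun p _ => (p.2, p.1))
      (fun p hp => tTerm_cancel K ω k a f σ.1 p.1 p.2
        (Finset.mem_product.1 hp).1 (Finset.mem_product.1 hp).2)
      (fun p _ hne h => hne (by
        have h1 : p.2 = p.1 := congrArg Prod.fst h
        rw [h1]
        exact tTerm_diag K ω k a f σ.1 p.1))
      (fun p hp => Finset.mem_product.2
        ⟨(Finset.mem_product.1 hp).2, (Finset.mem_product.1 hp).1⟩)
      (fun p _ => rfl)

end DD

section Dim

variable {m : ℕ} (K : SimplicialComplexOn m) (ω : Finset (Fin m)) (k : Type*) [Field k]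

instance (j : ℤ) : FiniteDimensional k (redCochain K ω k j) := by
  have : Finite {σ : Finset (Fin m) // σ ∈ K.faces ∧ σ ⊆ ω ∧ (σ.card : ℤ) = j + 1} :=
    Subtype.finite
  infer_instance

lemma betti_add_rank (j : ℤ) :
    redBetti K ω k j +
      Module.finrank k (LinearMap.range (redCoboundary K ω k (j - 1) j)) =
      Module.finrank k (LinearMap.ker (redCoboundary K ω k j (j + 1))) := by
  have hle : Submodule.map (redCoboundary K ω k (j - 1) j) ⊤ ≤
      LinearMap.ker (redCoboundary K ω k j (j + 1)) := by
    rw [Submodule.map_top]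
    rintro v ⟨u, rfl⟩
    exact LinearMap.mem_ker.2 (by
      have := dd K ω k (j - 1) j (j + 1) u
      calc redCoboundary K ω k j (j + 1) (redCoboundary K ω k (j - 1) j u) = 0 := this)
  have e1 := Submodule.finrank_quotient_add_finrank
      (Submodule.comap (LinearMap.ker (redCoboundary K ω k j (j + 1))).subtype
        (Submodule.map (redCoboundary K ω k (j - 1) j) ⊤))
  have e2 : Module.finrank k
      ↥(Submodule.comap (LinearMap.ker (redCoboundary K ω k j (j + 1))).subtype
        (Submodule.map (redCoboundary K ω k (j - 1) j) ⊤)) =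
      Module.finrank k ↥(Submodule.map (redCoboundary K ω k (j - 1) j) ⊤) :=
    (Submodule.comapSubtypeEquivOfLe hle).finrank_eq
  have e3 : Module.finrank k ↥(Submodule.map (redCoboundary K ω k (j - 1) j) ⊤) =
      Module.finrank k ↥(LinearMap.range (redCoboundary K ω k (j - 1) j)) := by
    rw [Submodule.map_top]
  have : redBetti K ω k j = Module.finrank k
      (↥(LinearMap.ker (redCoboundary K ω k j (j + 1))) ⧸
        Submodule.comap (LinearMap.ker (redCoboundary K ω k j (j + 1))).subtype
          (Submodule.map (redCoboundary K ω k (j - 1) j) ⊤)) := rfl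
  omega

end Dim

section Euler

variable {m : ℕ} (K : SimplicialComplexOn m) (ω : Finset (Fin m)) (k : Type*) [Field k]

noncomputable def Nfun (i : ℕ) : ℕ := Module.finrank k (redCochain K ω k ((i : ℤ) - 1))

noncomputable def Zfun (i : ℕ) : ℕ :=
  Module.finrank k (LinearMap.ker (redCoboundary K ω k ((i : ℤ) - 1) ((i : ℤ) - 1 + 1)))

noncomputable def Bfun (i : ℕ) : ℕ :=
  Module.finrank k (LinearMap.range (redCoboundary K ω k ((i : ℤ) - 1 - 1) ((i : ℤ) - 1)))

noncomputable def Hfun (i : ℕ) : ℕ := redBetti K ω k ((i : ℤ) - 1)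

lemma rank_congr (a a' b b' : ℤ) (ha : a = a') (hb : b = b') :
    Module.finrank k (LinearMap.range (redCoboundary K ω k a b)) =
    Module.finrank k (LinearMap.range (redCoboundary K ω k a' b')) := by
  subst ha; subst hb; rfl

lemma hHB (i : ℕ) : Hfun K ω k i + Bfun K ω k i = Zfun K ω k i :=
  betti_add_rank K ω k ((i : ℤ) - 1)

lemma hNZ (i : ℕ) : Nfun K ω k i = Zfun K ω k i + Bfun K ω k (i + 1) := by
  have rn := LinearMap.finrank_range_add_finrank_ker
    (redCoboundary K ω k ((i : ℤ) - 1) ((i : ℤ) - 1 + 1))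
  have e : Bfun K ω k (i + 1) = Module.finrank k
      (LinearMap.range (redCoboundary K ω k ((i : ℤ) - 1) ((i : ℤ) - 1 + 1))) := by
    apply rank_congr <;> push_cast <;> ring
  unfold Nfun Zfun
  omega

lemma hB0 : Bfun K ω k 0 = 0 := by
  classical
  have hempty : IsEmpty {σ : Finset (Fin m) // σ ∈ K.faces ∧ σ ⊆ ω ∧
      (σ.card : ℤ) = ((0 : ℕ) : ℤ) - 1 - 1 + 1} :=
    ⟨fun x => by have := x.2.2.2; omega⟩
  have h0 : Module.finrank k (redCochain K ω k (((0 : ℕ) : ℤ) - 1 - 1)) = 0 := by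
    rw [Module.finrank_fintype_fun_eq_card, Fintype.card_eq_zero]
  have := LinearMap.finrank_range_le (redCoboundary K ω k (((0 : ℕ) : ℤ) - 1 - 1) (((0 : ℕ) : ℤ) - 1))
  unfold Bfun
  omega

lemma card_le_m (σ : Finset (Fin m)) : σ.card ≤ m := by
  have := Finset.card_le_univ σ
  simpa using this

lemma hBtop : Bfun K ω k (m + 2) = 0 := by
  classical
  have hempty : IsEmpty {σ : Finset (Fin m) // σ ∈ K.faces ∧ σ ⊆ ω ∧
      (σ.card : ℤ) = (((m + 2 : ℕ)) : ℤ) - 1 + 1} :=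
    ⟨fun x => by have h1 := x.2.2.2; have h2 := card_le_m x.1; omega⟩
  have h0 : Module.finrank k (redCochain K ω k ((((m + 2 : ℕ)) : ℤ) - 1)) = 0 := by
    rw [Module.finrank_fintype_fun_eq_card, Fintype.card_eq_zero]
  have := Submodule.finrank_le
    (LinearMap.range (redCoboundary K ω k ((((m + 2 : ℕ)) : ℤ) - 1 - 1) ((((m + 2 : ℕ)) : ℤ) - 1)))
  unfold Bfun
  omega

open Classical in
lemma finrank_cochain (i : ℕ) :
    Nfun K ω k i =
      (Finset.univ.filter (fun σ : Finset (Fin m) =>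
        σ ∈ K.faces ∧ σ ⊆ ω ∧ σ.card = i)).card := by
  classical
  have hiff : ∀ σ : Finset (Fin m), ((σ.card : ℤ) = (i : ℤ) - 1 + 1) ↔ σ.card = i := by
    intro σ; omega
  unfold Nfun
  rw [Module.finrank_fintype_fun_eq_card, Fintype.card_subtype]
  congr 1
  apply Finset.filter_congr
  intro σ _
  rw [hiff]

end Euler

section Euler2

variable {m : ℕ} (K : SimplicialComplexOn m) (ω : Finset (Fin m)) (k : Type*) [Field k]

open Classical in
lemma abs_euler_le :
    |∑ σ ∈ Finset.univ.filter (fun σ : Finset (Fin m) => σ ∈ K.faces ∧ σ ⊆ ω),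
        (-1 : ℤ) ^ σ.card| ≤
      ∑ j ∈ Finset.Icc (-1 : ℤ) (m : ℤ), (redBetti K ω k j : ℤ) := by
  classical
  have main : ∑ i ∈ Finset.range (m + 2), (-1 : ℤ) ^ i * (Nfun K ω k i : ℤ) =
      ∑ i ∈ Finset.range (m + 2), (-1 : ℤ) ^ i * (Hfun K ω k i : ℤ) := by
    have tel := Finset.sum_range_sub' (fun i => (-1 : ℤ) ^ i * (Bfun K ω k i : ℤ)) (m + 2)
    have expand : ∀ i, (-1 : ℤ) ^ i * (Nfun K ω k i : ℤ) =
        (-1 : ℤ) ^ i * (Hfun K ω k i : ℤ) +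
        ((-1 : ℤ) ^ i * (Bfun K ω k i : ℤ) - (-1 : ℤ) ^ (i + 1) * (Bfun K ω k (i + 1) : ℤ)) := by
      intro i
      have h1 := hHB K ω k i
      have h2 := hNZ K ω k i
      have h3 : Nfun K ω k i = Hfun K ω k i + Bfun K ω k i + Bfun K ω k (i + 1) := by omega
      have h4 : (Nfun K ω k i : ℤ) =
          (Hfun K ω k i : ℤ) + (Bfun K ω k i : ℤ) + (Bfun K ω k (i + 1) : ℤ) := by
        exact_mod_cast h3
      rw [h4, pow_succ]
      ring
    rw [Finset.sum_congr rfl (fun i _ => expand i), Finset.sum_add_distrib, tel,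
      hB0, hBtop]
    simp
  have hface : ∑ i ∈ Finset.range (m + 2), (-1 : ℤ) ^ i * (Nfun K ω k i : ℤ) =
      ∑ σ ∈ Finset.univ.filter (fun σ : Finset (Fin m) => σ ∈ K.faces ∧ σ ⊆ ω),
        (-1 : ℤ) ^ σ.card := by
    rw [← Finset.sum_fiberwise_of_maps_to (g := fun σ : Finset (Fin m) => σ.card)
      (t := Finset.range (m + 2))
      (fun σ _ => Finset.mem_range.2 (lt_of_le_of_lt (card_le_m σ) (by omega)))
      (fun σ => (-1 : ℤ) ^ σ.card)]
    refine Finset.sum_congr rfl fun i _ => ?_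
    have hfe : (Finset.univ.filter (fun σ : Finset (Fin m) => σ ∈ K.faces ∧ σ ⊆ ω)).filter
        (fun σ => σ.card = i) = Finset.univ.filter
        (fun σ : Finset (Fin m) => σ ∈ K.faces ∧ σ ⊆ ω ∧ σ.card = i) := by
      rw [Finset.filter_filter]
      apply Finset.filter_congr
      intro σ _
      simp [and_assoc]
    rw [hfe, Finset.sum_congr rfl
        (fun σ hσ => by rw [(Finset.mem_filter.1 hσ).2.2.2]),
      Finset.sum_const, ← finrank_cochain K ω k i, nsmul_eq_mul, mul_comm]
  have reidx : ∑ j ∈ Finset.Icc (-1 : ℤ) (m : ℤ), (redBetti K ω k j : ℤ) =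
      ∑ i ∈ Finset.range (m + 2), (Hfun K ω k i : ℤ) := by
    have bc : ∀ j j' : ℤ, j = j' → redBetti K ω k j = redBetti K ω k j' := by
      rintro j j' rfl; rfl
    refine Finset.sum_nbij' (fun j => (j + 1).toNat) (fun i => (i : ℤ) - 1) ?_ ?_ ?_ ?_ ?_
    · intro j hj
      rw [Finset.mem_Icc] at hj
      rw [Finset.mem_range]
      omega
    · intro i hi
      rw [Finset.mem_range] at hi
      rw [Finset.mem_Icc]
      omega
    · intro j hj
      rw [Finset.mem_Icc] at hj
      omega
    · intro i hi
      omega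
    · intro j hj
      rw [Finset.mem_Icc] at hj
      have h : j = (((j + 1).toNat : ℕ) : ℤ) - 1 := by omega
      exact_mod_cast (bc _ _ h :
        redBetti K ω k j = Hfun K ω k (j + 1).toNat)
  rw [reidx, ← hface, main]
  refine le_trans (Finset.abs_sum_le_sum_abs _ _) ?_
  refine Finset.sum_le_sum fun i _ => ?_
  rw [abs_mul, abs_pow]
  simp

end Euler2

section Comb

variable {r : ℕ}

lemma sum_pow_inter (T : Finset (Fin r)) (A : Finset (Fin r)) :
    ∑ M ∈ A.powerset, (-1 : ℤ) ^ (M ∩ T).card =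
      if A ∩ T = ∅ then 2 ^ A.card else 0 := by
  classical
  induction A using Finset.induction_on with
  | empty => simp
  | @insert a A ha ih =>
    rw [Finset.sum_powerset_insert ha]
    by_cases haT : a ∈ T
    · have h2 : ∀ M ∈ A.powerset, (-1 : ℤ) ^ ((insert a M) ∩ T).card =
          -((-1 : ℤ) ^ (M ∩ T).card) := by
        intro M hM
        rw [Finset.mem_powerset] at hM
        have haM : a ∉ M ∩ T := fun h => ha (hM (Finset.mem_inter.1 h).1)
        rw [Finset.insert_inter_of_mem haT, Finset.card_insert_of_notMem haM, pow_succ]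
        ring
      rw [Finset.sum_congr rfl h2, if_neg]
      · simp
      · rw [Finset.insert_inter_of_mem haT]
        exact Finset.insert_ne_empty _ _
    · have h2 : ∀ M ∈ A.powerset, (-1 : ℤ) ^ ((insert a M) ∩ T).card =
          (-1 : ℤ) ^ (M ∩ T).card := by
        intro M _
        rw [Finset.insert_inter_of_notMem haT]
      rw [Finset.sum_congr rfl h2, ih, Finset.insert_inter_of_notMem haT,
        Finset.card_insert_of_notMem ha]
      split_ifs
      · ring
      · ring

lemma sum_subsets (S T : Finset (Fin r)) :
    ∑ L ∈ Finset.univ.filter (fun L : Finset (Fin r) => S ⊆ L), (-1 : ℤ) ^ (L ∩ T).card =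
      if T ⊆ S then (-1 : ℤ) ^ T.card * 2 ^ (r - S.card) else 0 := by
  classical
  have step : ∑ L ∈ Finset.univ.filter (fun L : Finset (Fin r) => S ⊆ L),
      (-1 : ℤ) ^ (L ∩ T).card =
      ∑ M ∈ (Finset.univ \ S).powerset, (-1 : ℤ) ^ ((S ∪ M) ∩ T).card := by
    refine Finset.sum_nbij' (fun L => L \ S) (fun M => S ∪ M) ?_ ?_ ?_ ?_ ?_
    · intro L hL
      rw [Finset.mem_powerset]
      exact Finset.sdiff_subset_sdiff (Finset.subset_univ _) le_rfl
    · intro M hM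
      rw [Finset.mem_filter]
      exact ⟨Finset.mem_univ _, Finset.subset_union_left⟩
    · intro L hL
      rw [Finset.mem_filter] at hL
      exact Finset.union_sdiff_of_subset hL.2
    · intro M hM
      rw [Finset.mem_powerset] at hM
      apply Finset.union_sdiff_cancel_left
      exact Finset.disjoint_sdiff.mono_right hM
    · intro L hL
      rw [Finset.mem_filter] at hL
      rw [Finset.union_sdiff_of_subset hL.2]
  rw [step]
  have hd : ∀ M ∈ (Finset.univ \ S).powerset,
      (-1 : ℤ) ^ ((S ∪ M) ∩ T).card =
      (-1 : ℤ) ^ (S ∩ T).card * (-1 : ℤ) ^ (M ∩ T).card := by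
    intro M hM
    rw [Finset.mem_powerset] at hM
    have hdisj : Disjoint S M := (Finset.disjoint_sdiff.mono_right hM)
    have : (S ∪ M) ∩ T = (S ∩ T) ∪ (M ∩ T) := Finset.union_inter_distrib_right _ _ _
    rw [this, Finset.card_union_of_disjoint
      (hdisj.mono Finset.inter_subset_left Finset.inter_subset_left), pow_add]
  rw [Finset.sum_congr rfl hd, ← Finset.mul_sum, sum_pow_inter]
  have hTS : (Finset.univ \ S) ∩ T = T \ S := by
    ext x; simp [Finset.mem_sdiff, Finset.mem_inter]; tauto
  rw [hTS]
  by_cases h : T ⊆ S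
  · rw [if_pos (Finset.sdiff_eq_empty_iff_subset.2 h), if_pos h]
    have h1 : S ∩ T = T := Finset.inter_eq_right.2 h
    have h2 : (Finset.univ \ S).card = r - S.card := by
      rw [Finset.card_sdiff_of_subset (Finset.subset_univ _)]
      simp
    rw [h1, h2]
  · rw [if_neg (fun he => h (Finset.sdiff_eq_empty_iff_subset.1 he)), if_neg h]
    ring

end Comb


/-- Let `K` be a simplicial complex on `[m]`, `k` a field, and `α` a partition
of `[m]` into `r` blocks that is nondegenerate for `K`.  Then the total sum of
the reduced Betti numbers of the `2^r` special full subcomplexes `K|_{ω_L}`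
satisfies `Σ_{L ⊆ [r]} Σ_j dim_k H̃^j(K|_{ω_L}; k) ≥ 2^{r − dim K − 1}`.
(All degrees `j ≥ −1` contribute; degrees above `m − 1` vanish, so the inner
sum over `j ∈ [−1, m]` captures all of them.) -/
theorem sum_total_redBetti_ge_pow {m r : ℕ} (K : SimplicialComplexOn m)
    (k : Type*) [Field k] (c : Fin m → Fin r) (hc : Function.Surjective c)
    (hnd : IsNondegenerate K c) :
    2 ^ (r - K.dimAdd1) ≤
      ∑ L : Finset (Fin r), ∑ j ∈ Finset.Icc (-1 : ℤ) (m : ℤ),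
        redBetti K (omegaOf c L) k j := by
  classical
  set n := K.dimAdd1 with hn
  have hnonempty : {n : ℕ | ∃ σ ∈ K.faces, σ.card = n}.Nonempty := ⟨0, ∅, K.empty_mem, rfl⟩
  have hbdd : BddAbove {n : ℕ | ∃ σ ∈ K.faces, σ.card = n} := by
    refine ⟨m, ?_⟩
    rintro x ⟨σ, hσ, rfl⟩
    exact card_le_m σ
  obtain ⟨σ₀, hσ₀f, hσ₀c⟩ : ∃ σ ∈ K.faces, σ.card = n := Nat.sSup_mem hnonempty hbdd
  have hmax : ∀ σ ∈ K.faces, σ.card ≤ n := fun σ hσ => le_csSup hbdd ⟨σ, hσ, rfl⟩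
  have himg : ∀ σ ∈ K.faces, (σ.image c).card = σ.card := by
    intro σ hσ
    apply Finset.card_image_of_injOn
    intro x hx y hy h
    exact hnd σ hσ x hx y hy h
  set T := σ₀.image c with hT
  have hTcard : T.card = n := by rw [hT, himg σ₀ hσ₀f, hσ₀c]
  set e : Finset (Fin r) → ℤ := fun L =>
    ∑ σ ∈ Finset.univ.filter
      (fun σ : Finset (Fin m) => σ ∈ K.faces ∧ σ ⊆ omegaOf c L), (-1 : ℤ) ^ σ.card with he
  have key : ∑ L : Finset (Fin r), (-1 : ℤ) ^ (L ∩ T).card * e L =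
      (2 : ℤ) ^ (r - n) *
        ((Finset.univ.filter
          (fun σ : Finset (Fin m) => σ ∈ K.faces ∧ T ⊆ σ.image c)).card : ℤ) := by
    have step1 : ∀ L : Finset (Fin r), (-1 : ℤ) ^ (L ∩ T).card * e L =
        ∑ σ ∈ Finset.univ.filter (fun σ : Finset (Fin m) => σ ∈ K.faces),
          (if σ.image c ⊆ L then (-1 : ℤ) ^ (L ∩ T).card * (-1 : ℤ) ^ σ.card else 0) := by
      intro L
      simp only [he]
      rw [show Finset.univ.filter
          (fun σ : Finset (Fin m) => σ ∈ K.faces ∧ σ ⊆ omegaOf c L) =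
          (Finset.univ.filter (fun σ : Finset (Fin m) => σ ∈ K.faces)).filter
            (fun σ => σ.image c ⊆ L) from by
        rw [Finset.filter_filter]
        apply Finset.filter_congr
        intro σ _
        constructor
        · rintro ⟨h1, h2⟩
          exact ⟨h1, Finset.image_subset_iff.2 fun x hx => by
            have := h2 hx
            rw [omegaOf, Finset.mem_filter] at this
            exact this.2⟩
        · rintro ⟨h1, h2⟩
          refine ⟨h1, fun x hx => ?_⟩
          rw [omegaOf, Finset.mem_filter]
          exact ⟨Finset.mem_univ _, Finset.image_subset_iff.1 h2 x hx⟩]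
      rw [Finset.mul_sum, Finset.sum_filter]
    rw [Finset.sum_congr rfl (fun L _ => step1 L), Finset.sum_comm]
    have step2 : ∀ σ ∈ Finset.univ.filter (fun σ : Finset (Fin m) => σ ∈ K.faces),
        (∑ L : Finset (Fin r),
          (if σ.image c ⊆ L then (-1 : ℤ) ^ (L ∩ T).card * (-1 : ℤ) ^ σ.card else 0)) =
        (if T ⊆ σ.image c then (2 : ℤ) ^ (r - n) else 0) := by
      intro σ hσ
      have hσf : σ ∈ K.faces := (Finset.mem_filter.1 hσ).2
      rw [← Finset.sum_filter]
      have : ∑ L ∈ Finset.univ.filter (fun L : Finset (Fin r) => σ.image c ⊆ L),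
          (-1 : ℤ) ^ (L ∩ T).card * (-1 : ℤ) ^ σ.card =
          (∑ L ∈ Finset.univ.filter (fun L : Finset (Fin r) => σ.image c ⊆ L),
            (-1 : ℤ) ^ (L ∩ T).card) * (-1 : ℤ) ^ σ.card := by
        rw [Finset.sum_mul]
      rw [this, sum_subsets]
      by_cases hTs : T ⊆ σ.image c
      · rw [if_pos hTs, if_pos hTs]
        have h1 : σ.card ≤ n := hmax σ hσf
        have h2 : n ≤ (σ.image c).card := hTcard ▸ Finset.card_le_card hTs
        rw [himg σ hσf] at h2
        have h3 : σ.card = n := le_antisymm h1 h2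
        have h4 : (σ.image c).card = n := by rw [himg σ hσf, h3]
        rw [hTcard, h4, h3]
        rw [mul_comm ((-1:ℤ)^n) _, mul_assoc, ← pow_add]
        rw [Even.neg_one_pow ⟨n, rfl⟩, mul_one]
      · rw [if_neg hTs, if_neg hTs, zero_mul]
    rw [Finset.sum_congr rfl step2, ← Finset.sum_filter, Finset.sum_const,
      Finset.filter_filter, nsmul_eq_mul, mul_comm]
  have hpos : (1 : ℤ) ≤ ((Finset.univ.filter
      (fun σ : Finset (Fin m) => σ ∈ K.faces ∧ T ⊆ σ.image c)).card : ℤ) := by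
    have : σ₀ ∈ Finset.univ.filter
        (fun σ : Finset (Fin m) => σ ∈ K.faces ∧ T ⊆ σ.image c) :=
      Finset.mem_filter.2 ⟨Finset.mem_univ _, hσ₀f, le_of_eq hT⟩
    have := Finset.card_pos.2 ⟨σ₀, this⟩
    omega
  have lhs_ge : (2 : ℤ) ^ (r - n) ≤ ∑ L : Finset (Fin r), (-1 : ℤ) ^ (L ∩ T).card * e L := by
    rw [key]
    nlinarith [pow_nonneg (by norm_num : (0:ℤ) ≤ 2) (r - n)]
  have ub : ∀ L : Finset (Fin r), (-1 : ℤ) ^ (L ∩ T).card * e L ≤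
      ∑ j ∈ Finset.Icc (-1 : ℤ) (m : ℤ), (redBetti K (omegaOf c L) k j : ℤ) := by
    intro L
    refine le_trans (le_abs_self _) (le_trans ?_ (abs_euler_le K (omegaOf c L) k))
    rw [abs_mul, abs_pow, abs_neg, abs_one, one_pow, one_mul]
  have total := le_trans lhs_ge (Finset.sum_le_sum fun L _ => ub L)
  have : ((2 ^ (r - n) : ℕ) : ℤ) ≤
      ((∑ L : Finset (Fin r), ∑ j ∈ Finset.Icc (-1 : ℤ) (m : ℤ),
        redBetti K (omegaOf c L) k j : ℕ) : ℤ) := by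
    push_cast
    exact total
  exact_mod_cast this
end

section
/- Let K be a simplicial complex on [m] and k a field. Then for every i ≥ 0, Σ_{ω⊆[m]} β^{k(K)}_{i,ω} ≥ C(m − dim(K) − 1, i), where β^{k(K)}_{i,ω} = dim_k H̃^{|ω|−i−1}(K|_ω; k) are the multigraded Betti numbers of the Stanley-Reisner ring (via Hochster's formula). -/
open Finset

namespace CLBT

variable {m : ℕ} (k : Type*) [Field k]

/-- Down-closed family of finsets. -/
def DC (C : Set (Finset (Fin m))) : Prop := ∀ σ ∈ C, ∀ τ ⊆ σ, τ ∈ C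

/-- Cochains of an arbitrary family `C`, restricted to `ω`, in degree `j`. -/
abbrev CC (C : Set (Finset (Fin m))) (ω : Finset (Fin m)) (j : ℤ) : Type _ :=
  {σ : Finset (Fin m) // σ ∈ C ∧ σ ⊆ ω ∧ (σ.card : ℤ) = j + 1} → k

open Classical in
/-- Coboundary, identical formula to `redCoboundary`. -/
noncomputable def DD (C : Set (Finset (Fin m))) (ω : Finset (Fin m)) (a b : ℤ) :
    CC k C ω a →ₗ[k] CC k C ω b where
  toFun f := fun σ => ∑ x ∈ σ.1.attach,
    if h : σ.1.erase x.1 ∈ C ∧ σ.1.erase x.1 ⊆ ω ∧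
        (((σ.1.erase x.1).card : ℤ) = a + 1) then
      ((-1 : k) ^ (σ.1.filter (fun y => y < x.1)).card) * f ⟨σ.1.erase x.1, h⟩
    else 0
  map_add' f g := by
    funext σ
    simp only [Pi.add_apply]
    rw [← Finset.sum_add_distrib]
    refine Finset.sum_congr rfl fun x _ => ?_
    split
    · simp [mul_add]
    · simp
  map_smul' a f := by
    funext σ
    simp only [Pi.smul_apply, RingHom.id_apply, smul_eq_mul, Finset.mul_sum]
    refine Finset.sum_congr rfl fun x _ => ?_
    split
    · simp [mul_left_comm]
    · simp

lemma bridge {K : SimplicialComplexOn m} {ω : Finset (Fin m)} {a b : ℤ} :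
    redCoboundary K ω k a b = DD k K.faces ω a b := rfl

open Classical in
/-- Extend a cochain to a total function on all finsets. -/
noncomputable def tot (C : Set (Finset (Fin m))) (ω : Finset (Fin m)) (a : ℤ)
    (f : CC k C ω a) (ρ : Finset (Fin m)) : k :=
  if h : ρ ∈ C ∧ ρ ⊆ ω ∧ (ρ.card : ℤ) = a + 1 then f ⟨ρ, h⟩ else 0

/-- sign -/
def sg (σ : Finset (Fin m)) (x : Fin m) : k := (-1 : k) ^ (σ.filter (fun y => y < x)).card

lemma dd_apply (C : Set (Finset (Fin m))) (ω : Finset (Fin m)) (a b : ℤ)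
    (f : CC k C ω a) (σ : {σ : Finset (Fin m) // σ ∈ C ∧ σ ⊆ ω ∧ (σ.card : ℤ) = b + 1}) :
    DD k C ω a b f σ = ∑ x ∈ σ.1, sg k σ.1 x * tot k C ω a f (σ.1.erase x) := by
  show (∑ x ∈ σ.1.attach, _) = _
  rw [← Finset.sum_attach σ.1 (fun x => sg k σ.1 x * tot k C ω a f (σ.1.erase x))]
  refine Finset.sum_congr rfl fun x _ => ?_
  unfold tot sg
  split
  · rfl
  · simp

lemma tot_of_cond {C : Set (Finset (Fin m))} {ω : Finset (Fin m)} {a : ℤ}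
    (f : CC k C ω a) {ρ : Finset (Fin m)} (h : ρ ∈ C ∧ ρ ⊆ ω ∧ (ρ.card : ℤ) = a + 1) :
    tot k C ω a f ρ = f ⟨ρ, h⟩ := by
  unfold tot; rw [dif_pos h]

lemma tot_of_not {C : Set (Finset (Fin m))} {ω : Finset (Fin m)} {a : ℤ}
    (f : CC k C ω a) {ρ : Finset (Fin m)} (h : ¬(ρ ∈ C ∧ ρ ⊆ ω ∧ (ρ.card : ℤ) = a + 1)) :
    tot k C ω a f ρ = 0 := by
  unfold tot; rw [dif_neg h]

end CLBT
namespace CLBT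
variable {m : ℕ} (k : Type*) [Field k]

lemma sg_mul_self (σ : Finset (Fin m)) (x : Fin m) : sg k σ x * sg k σ x = 1 := by
  unfold sg; rw [← pow_add, ← two_mul, pow_mul]; norm_num

lemma sg_erase_of_lt {σ : Finset (Fin m)} {x y : Fin m} (hx : x ∈ σ) (hxy : x < y) :
    sg k (σ.erase x) y = - sg k σ y := by
  unfold sg
  rw [Finset.filter_erase, Finset.card_erase_of_mem (by simp [hx, hxy])]
  have h1 : 1 ≤ (σ.filter (fun z => z < y)).card :=
    Finset.card_pos.mpr ⟨x, by simp [hx, hxy]⟩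
  obtain ⟨d, hd⟩ : ∃ d, (σ.filter (fun z => z < y)).card = d + 1 :=
    ⟨_, (Nat.succ_pred_eq_of_pos h1).symm⟩
  rw [hd, Nat.add_sub_cancel, pow_succ]
  ring

lemma sg_erase_of_not_lt {σ : Finset (Fin m)} {x y : Fin m} (hxy : ¬ x < y) :
    sg k (σ.erase x) y = sg k σ y := by
  unfold sg
  rw [Finset.filter_erase, Finset.erase_eq_of_notMem (by simp [hxy])]

lemma dd_dd {C : Set (Finset (Fin m))} {ω : Finset (Fin m)} (hC : DC C) (a : ℤ)
    (f : CC k C ω a) :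
    DD k C ω (a+1) (a+2) (DD k C ω a (a+1) f) = 0 := by
  funext σ
  rw [dd_apply]
  have key : ∀ x ∈ σ.1, sg k σ.1 x * tot k C ω (a+1) (DD k C ω a (a+1) f) (σ.1.erase x)
      = ∑ y ∈ σ.1, (if y = x then 0 else
          (sg k σ.1 x * sg k (σ.1.erase x) y) * tot k C ω a f ((σ.1.erase x).erase y)) := by
    intro x hx
    have hcond : σ.1.erase x ∈ C ∧ σ.1.erase x ⊆ ω ∧ ((σ.1.erase x).card : ℤ) = (a+1) + 1 := by
      refine ⟨hC σ.1 σ.2.1 _ (Finset.erase_subset x σ.1),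
        (Finset.erase_subset x σ.1).trans σ.2.2.1, ?_⟩
      rw [Finset.card_erase_of_mem hx]
      have h1 : 1 ≤ σ.1.card := Finset.card_pos.mpr ⟨x, hx⟩
      have := σ.2.2.2
      push_cast [Nat.cast_sub h1]
      omega
    rw [tot_of_cond k _ hcond, dd_apply]
    rw [Finset.mul_sum]
    rw [← Finset.sum_erase σ.1 (a := x) (f := fun y => if y = x then (0:k) else
          (sg k σ.1 x * sg k (σ.1.erase x) y) * tot k C ω a f ((σ.1.erase x).erase y))
        (by simp)]
    refine Finset.sum_congr rfl fun y hy => ?_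
    rw [if_neg (Finset.ne_of_mem_erase hy)]
    ring
  rw [Finset.sum_congr rfl key, ← Finset.sum_product']
  rw [Finset.sum_involution (fun p _ => (p.2, p.1))]
  · rfl
  · rintro ⟨x, y⟩ hp
    simp only
    rcases eq_or_ne y x with rfl | hne
    · simp
    rw [if_neg hne, if_neg (Ne.symm hne)]
    have hx : x ∈ σ.1 := (Finset.mem_product.mp hp).1
    have hy : y ∈ σ.1 := (Finset.mem_product.mp hp).2
    have harg : (σ.1.erase x).erase y = (σ.1.erase y).erase x := Finset.erase_right_comm
    have hsgn : sg k σ.1 x * sg k (σ.1.erase x) y = -(sg k σ.1 y * sg k (σ.1.erase y) x) := by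
      rcases lt_or_gt_of_ne hne with h | h
      · rw [sg_erase_of_lt k hy h, sg_erase_of_not_lt k (not_lt.mpr h.le)]; ring
      · rw [sg_erase_of_lt k hx h, sg_erase_of_not_lt k (not_lt.mpr h.le)]; ring
    rw [harg, hsgn]; ring
  · rintro ⟨x, y⟩ hp hne
    simp only [ne_eq, Prod.mk.injEq]
    rintro ⟨rfl, -⟩
    simp at hne
  · rintro ⟨x, y⟩ hp
    simp only [Finset.mem_product] at hp ⊢
    exact ⟨hp.2, hp.1⟩
  · rintro ⟨x, y⟩ hp
    rfl

end CLBT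
namespace CLBT
variable {m : ℕ} (k : Type*) [Field k]

/-- Restriction of cochains to a subcomplex / smaller vertex set. -/
noncomputable def res {C C' : Set (Finset (Fin m))} {ω ω' : Finset (Fin m)}
    (hC : C ⊆ C') (hω : ω ⊆ ω') (a : ℤ) (g : CC k C' ω' a) : CC k C ω a :=
  fun σ => g ⟨σ.1, hC σ.2.1, σ.2.2.1.trans hω, σ.2.2.2⟩

/-- Extension (by zero) of cochains to a larger complex / vertex set. -/
noncomputable def ext {C C' : Set (Finset (Fin m))} {ω ω' : Finset (Fin m)}
    (a : ℤ) (f : CC k C ω a) : CC k C' ω' a :=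
  fun σ => tot k C ω a f σ.1

lemma tot_ext {C C' : Set (Finset (Fin m))} {ω ω' : Finset (Fin m)}
    (hC : C ⊆ C') (hω : ω ⊆ ω') (a : ℤ) (f : CC k C ω a) (ρ : Finset (Fin m)) :
    tot k C' ω' a (ext k (C := C) (ω := ω) a f) ρ = tot k C ω a f ρ := by
  by_cases h : ρ ∈ C' ∧ ρ ⊆ ω' ∧ (ρ.card : ℤ) = a + 1
  · rw [tot_of_cond k _ h]; rfl
  · rw [tot_of_not k _ h, tot_of_not]
    intro hc; exact h ⟨hC hc.1, hc.2.1.trans hω, hc.2.2⟩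

lemma res_ext {C C' : Set (Finset (Fin m))} {ω ω' : Finset (Fin m)}
    (hC : C ⊆ C') (hω : ω ⊆ ω') (a : ℤ) (f : CC k C ω a) :
    res k hC hω a (ext k (C' := C') (ω' := ω') a f) = f := by
  funext σ
  show tot k C ω a f σ.1 = f σ
  rw [tot_of_cond k f σ.2]

lemma cond_erase {C : Set (Finset (Fin m))} {ω : Finset (Fin m)} {a : ℤ}
    (hC : DC C) {σ : Finset (Fin m)} (hσ : σ ∈ C ∧ σ ⊆ ω ∧ (σ.card : ℤ) = (a+1) + 1)
    {x : Fin m} (hx : x ∈ σ) :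
    σ.erase x ∈ C ∧ σ.erase x ⊆ ω ∧ ((σ.erase x).card : ℤ) = a + 1 := by
  refine ⟨hC σ hσ.1 _ (Finset.erase_subset x σ), (Finset.erase_subset x σ).trans hσ.2.1, ?_⟩
  rw [Finset.card_erase_of_mem hx]
  have h1 : 1 ≤ σ.card := Finset.card_pos.mpr ⟨x, hx⟩
  have := hσ.2.2
  push_cast [Nat.cast_sub h1]
  omega

lemma res_comm {C C' : Set (Finset (Fin m))} {ω ω' : Finset (Fin m)}
    (hDC : DC C) (hDC' : DC C') (hC : C ⊆ C') (hω : ω ⊆ ω') (a b : ℤ) (hb : b = a + 1)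
    (g : CC k C' ω' a) :
    DD k C ω a b (res k hC hω a g) = res k hC hω b (DD k C' ω' a b g) := by
  subst hb
  funext σ
  rw [show res k hC hω (a+1) (DD k C' ω' a (a+1) g) σ
      = DD k C' ω' a (a+1) g ⟨σ.1, hC σ.2.1, σ.2.2.1.trans hω, σ.2.2.2⟩ from rfl]
  rw [dd_apply, dd_apply]
  refine Finset.sum_congr rfl fun x hx => ?_
  congr 1
  have hcond : σ.1.erase x ∈ C ∧ σ.1.erase x ⊆ ω ∧ ((σ.1.erase x).card : ℤ) = a + 1 :=
    cond_erase hDC σ.2 hx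
  have hcond' : σ.1.erase x ∈ C' ∧ σ.1.erase x ⊆ ω' ∧ ((σ.1.erase x).card : ℤ) = a + 1 :=
    ⟨hC hcond.1, hcond.2.1.trans hω, hcond.2.2⟩
  rw [tot_of_cond k _ hcond, tot_of_cond k _ hcond']
  rfl

lemma tot_dd_ext_vanish {C D : Set (Finset (Fin m))} {ω : Finset (Fin m)}
    (hD : DC D) (hsub : D ⊆ C) (j : ℤ) (f : CC k D ω j)
    (hf : DD k D ω j (j+1) f = 0) (μ : Finset (Fin m)) (hμD : μ ∈ D) (hμω : μ ⊆ ω) :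
    tot k C ω (j+1) (DD k C ω j (j+1) (ext k (C' := C) (ω' := ω) j f)) μ = 0 := by
  by_cases hcond : μ ∈ C ∧ μ ⊆ ω ∧ (μ.card : ℤ) = (j+1) + 1
  · rw [tot_of_cond k _ hcond, dd_apply]
    have hμ : μ ∈ D ∧ μ ⊆ ω ∧ (μ.card : ℤ) = (j+1) + 1 := ⟨hμD, hμω, hcond.2.2⟩
    calc (∑ x ∈ μ, sg k μ x * tot k C ω j (ext k j f) (μ.erase x))
        = ∑ x ∈ μ, sg k μ x * tot k D ω j f (μ.erase x) := by
          refine Finset.sum_congr rfl fun x hx => ?_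
          rw [tot_ext k hsub subset_rfl]
      _ = DD k D ω j (j+1) f ⟨μ, hμ⟩ := (dd_apply k D ω j (j+1) f ⟨μ, hμ⟩).symm
      _ = 0 := by rw [hf]; rfl
  · exact tot_of_not k _ hcond

lemma dd_F_zero {C D : Set (Finset (Fin m))} {ω : Finset (Fin m)} {v : Fin m}
    (hC : DC C) (hD : DC D) (hsub : D ⊆ C)
    (hstar : ∀ σ ∈ C, v ∈ σ → σ.erase v ∈ D) (hv : v ∉ ω) (j : ℤ)
    (f : CC k D ω j) (hf : DD k D ω j (j+1) f = 0) :
    DD k C (insert v ω) (j+1) (j+2)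
      (ext k (C' := C) (ω' := insert v ω) (j+1)
        (DD k C ω j (j+1) (ext k (C' := C) (ω' := ω) j f))) = 0 := by
  set g := DD k C ω j (j+1) (ext k (C' := C) (ω' := ω) j f) with hg
  funext ν
  rw [dd_apply]
  show (∑ x ∈ ν.1, sg k ν.1 x * tot k C (insert v ω) (j+1) (ext k (j+1) g) (ν.1.erase x)) = 0
  have htot : ∀ x, tot k C (insert v ω) (j+1) (ext k (C := C) (ω := ω) (j+1) g) (ν.1.erase x)
      = tot k C ω (j+1) g (ν.1.erase x) := fun x =>
    tot_ext k subset_rfl (Finset.subset_insert v ω) (j+1) g _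
  by_cases hvν : v ∈ ν.1
  · refine Finset.sum_eq_zero fun x hx => ?_
    rw [htot x]
    rcases eq_or_ne x v with rfl | hne
    · rw [tot_dd_ext_vanish k hD hsub j f hf _ (hstar ν.1 ν.2.1 hvν)
        (by
          intro y hy
          have hyν : y ∈ ν.1 := Finset.mem_of_mem_erase hy
          have := ν.2.2.1 hyν
          rcases Finset.mem_insert.mp this with rfl | h
          · exact absurd rfl (Finset.ne_of_mem_erase hy)
          · exact h)]
      ring
    · rw [tot_of_not, mul_zero]
      rintro ⟨-, hsub2, -⟩
      exact hv (hsub2 (Finset.mem_erase.mpr ⟨hne.symm, hvν⟩))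
  · have hνω : ν.1 ⊆ ω := fun y hy => by
      rcases Finset.mem_insert.mp (ν.2.2.1 hy) with rfl | h
      · exact absurd hy hvν
      · exact h
    have hν : ν.1 ∈ C ∧ ν.1 ⊆ ω ∧ (ν.1.card : ℤ) = (j+2) + 1 := ⟨ν.2.1, hνω, ν.2.2.2⟩
    calc (∑ x ∈ ν.1, sg k ν.1 x * tot k C (insert v ω) (j+1) (ext k (j+1) g) (ν.1.erase x))
        = ∑ x ∈ ν.1, sg k ν.1 x * tot k C ω (j+1) g (ν.1.erase x) := by
          exact Finset.sum_congr rfl fun x _ => by rw [htot x]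
      _ = DD k C ω (j+1) (j+2) g ⟨ν.1, hν⟩ := (dd_apply k C ω (j+1) (j+2) g ⟨ν.1, hν⟩).symm
      _ = 0 := by rw [hg, dd_dd k hC]; rfl

end CLBT
namespace CLBT
variable {m : ℕ} (k : Type*) [Field k]

lemma sg_insert_of_lt {s : Finset (Fin m)} {v y : Fin m} (hv : v ∉ s) (h : v < y) :
    sg k (insert v s) y = - sg k s y := by
  unfold sg
  rw [Finset.filter_insert, if_pos h,
    Finset.card_insert_of_notMem (fun hc => hv (Finset.mem_filter.mp hc).1), pow_succ]
  ring

lemma sg_insert_of_not_lt {s : Finset (Fin m)} {v y : Fin m} (h : ¬ v < y) :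
    sg k (insert v s) y = sg k s y := by
  unfold sg
  rw [Finset.filter_insert, if_neg h]

lemma app_congr {C : Set (Finset (Fin m))} {ω : Finset (Fin m)} {a : ℤ}
    (G : CC k C ω a) {ρ ρ' : Finset (Fin m)} (h : ρ = ρ')
    (hρ : ρ ∈ C ∧ ρ ⊆ ω ∧ (ρ.card : ℤ) = a + 1)
    (hρ' : ρ' ∈ C ∧ ρ' ⊆ ω ∧ (ρ'.card : ℤ) = a + 1) :
    G ⟨ρ, hρ⟩ = G ⟨ρ', hρ'⟩ := by subst h; rfl

lemma cone_contract {D : Set (Finset (Fin m))} {ω' : Finset (Fin m)} {v : Fin m}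
    (hD : DC D) (hcone : ∀ σ ∈ D, insert v σ ∈ D) (hv : v ∈ ω') (j : ℤ)
    (G : CC k D ω' j) (hG : DD k D ω' j (j+1) G = 0) :
    ∃ w : CC k D ω' (j-1), DD k D ω' (j-1) j w = G := by
  classical
  set wfun : Finset (Fin m) → k := fun ρ =>
    if v ∈ ρ then 0 else sg k (insert v ρ) v * tot k D ω' j G (insert v ρ) with hwfun
  refine ⟨fun σ => wfun σ.1, ?_⟩
  funext σ
  have hσcond : σ.1 ∈ D ∧ σ.1 ⊆ ω' ∧ (σ.1.card : ℤ) = j + 1 := σ.2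
  have hσcond' : σ.1 ∈ D ∧ σ.1 ⊆ ω' ∧ (σ.1.card : ℤ) = (j - 1) + 1 + 1 :=
    ⟨σ.2.1, σ.2.2.1, by have := σ.2.2.2; omega⟩
  rw [dd_apply]
  have htot : ∀ x ∈ σ.1, tot k D ω' (j-1) (fun σ => wfun σ.1) (σ.1.erase x)
      = wfun (σ.1.erase x) := by
    intro x hx
    exact tot_of_cond k _ (cond_erase hD hσcond' hx)
  rw [Finset.sum_congr rfl (fun x hx => by rw [htot x hx])]
  by_cases hvσ : v ∈ σ.1
  · rw [Finset.sum_eq_single_of_mem v hvσ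
      (fun x hx hne => by
        rw [hwfun]
        simp only
        rw [if_pos (Finset.mem_erase.mpr ⟨Ne.symm hne, hvσ⟩), mul_zero])]
    rw [hwfun]
    simp only
    rw [if_neg (Finset.notMem_erase v σ.1)]
    have hins : insert v (σ.1.erase v) = σ.1 := Finset.insert_erase hvσ
    rw [show tot k D ω' j G (insert v (σ.1.erase v)) = tot k D ω' j G σ.1 from by rw [hins],
      tot_of_cond k G hσcond,
      show sg k (insert v (σ.1.erase v)) v = sg k σ.1 v from by rw [hins]]
    rw [← mul_assoc, sg_mul_self, one_mul]
  · -- v ∉ σ : use the cocycle identity at insert v σ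
    set τ := insert v σ.1 with hτ
    have hvτ : v ∈ τ := Finset.mem_insert_self v σ.1
    have condτ : τ ∈ D ∧ τ ⊆ ω' ∧ (τ.card : ℤ) = (j + 1) + 1 := by
      refine ⟨hcone _ σ.2.1, Finset.insert_subset hv σ.2.2.1, ?_⟩
      rw [Finset.card_insert_of_notMem hvσ]
      have := σ.2.2.2
      push_cast
      omega
    have hcoc0 : (0 : k) = DD k D ω' j (j+1) G ⟨τ, condτ⟩ := by rw [hG]; rfl
    rw [dd_apply, ← Finset.add_sum_erase _ _ hvτ] at hcoc0
    have herase : τ.erase v = σ.1 := Finset.erase_insert hvσ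
    have htotv : tot k D ω' j G (τ.erase v) = G σ := by
      rw [herase, tot_of_cond k G hσcond]
    rw [htotv, herase] at hcoc0
    have hcoc : (0 : k) = sg k τ v * G σ
        + ∑ x ∈ σ.1, sg k τ x * tot k D ω' j G (τ.erase x) := hcoc0
    -- now rewrite our sum termwise
    have hterm : ∀ x ∈ σ.1, sg k σ.1 x * wfun (σ.1.erase x)
        = -(sg k τ v * (sg k τ x * tot k D ω' j G (τ.erase x))) := by
      intro x hx
      have hxv : x ≠ v := fun h => hvσ (h ▸ hx)
      have hins2 : insert v (σ.1.erase x) = τ.erase x := by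
        rw [hτ, Finset.erase_insert_of_ne (Ne.symm hxv)]
      have hvex : v ∉ σ.1.erase x := fun h => hvσ (Finset.mem_of_mem_erase h)
      rw [hwfun]
      simp only
      rw [if_neg hvex, hins2]
      have hsgv : sg k (insert v (σ.1.erase x)) v = sg k (σ.1.erase x) v :=
        sg_insert_of_not_lt k (lt_irrefl v)
      rw [hins2] at hsgv
      have hsgτv : sg k τ v = sg k σ.1 v := sg_insert_of_not_lt k (lt_irrefl v)
      rcases lt_or_gt_of_ne hxv with hlt | hgt
      · rw [hsgv, sg_erase_of_lt k hx hlt, hsgτv,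
          show sg k τ x = sg k σ.1 x from sg_insert_of_not_lt k (not_lt.mpr hlt.le)]
        ring
      · rw [hsgv, sg_erase_of_not_lt k (not_lt.mpr hgt.le), hsgτv,
          show sg k τ x = - sg k σ.1 x from sg_insert_of_lt k hvσ hgt]
        ring
    rw [Finset.sum_congr rfl hterm, Finset.sum_neg_distrib, ← Finset.mul_sum]
    have hsum : (∑ x ∈ σ.1, sg k τ x * tot k D ω' j G (τ.erase x)) = -(sg k τ v * G σ) := by
      linear_combination (-1 : k) * hcoc
    rw [hsum,
      show -(sg k τ v * -(sg k τ v * G σ)) = (sg k τ v * sg k τ v) * G σ from by ring,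
      sg_mul_self, one_mul]

end CLBT
namespace CLBT
variable {m : ℕ} (k : Type*) [Field k]

lemma key {C D : Set (Finset (Fin m))} {ω : Finset (Fin m)} {v : Fin m}
    (hC : DC C) (hD : DC D) (hsub : D ⊆ C)
    (hstar : ∀ σ ∈ C, v ∈ σ → σ.erase v ∈ D)
    (hcone : ∀ σ ∈ D, insert v σ ∈ D)
    (hv : v ∉ ω) (j : ℤ)
    (h1 : ∀ F : CC k C (insert v ω) (j+1), DD k C (insert v ω) (j+1) (j+2) F = 0 →
          ∃ G : CC k C (insert v ω) j, DD k C (insert v ω) j (j+1) G = F)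
    (h2 : ∀ p : CC k C ω j, DD k C ω j (j+1) p = 0 →
          ∃ u : CC k C ω (j-1), DD k C ω (j-1) j u = p)
    (f : CC k D ω j) (hf : DD k D ω j (j+1) f = 0) :
    ∃ w : CC k D ω (j-1), DD k D ω (j-1) j w = f := by
  have hωins : ω ⊆ insert v ω := Finset.subset_insert v ω
  set g : CC k C ω (j+1) := DD k C ω j (j+1) (ext k (C' := C) (ω' := ω) j f) with hg
  set F : CC k C (insert v ω) (j+1) := ext k (C' := C) (ω' := insert v ω) (j+1) g with hF
  have hFcoc : DD k C (insert v ω) (j+1) (j+2) F = 0 :=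
    dd_F_zero k hC hD hsub hstar hv j f hf
  obtain ⟨G, hGF⟩ := h1 F hFcoc
  have hresF : res k (subset_refl C) hωins (j+1) F = g := res_ext k _ _ _ _
  set p : CC k C ω j := ext k (C' := C) (ω' := ω) j f - res k (subset_refl C) hωins j G
    with hp
  have hpcoc : DD k C ω j (j+1) p = 0 := by
    rw [hp, map_sub, res_comm k hC hC (subset_refl C) hωins j (j+1) rfl G, hGF, hresF, ← hg, sub_self]
  obtain ⟨u, hu⟩ := h2 p hpcoc
  set G' : CC k D (insert v ω) j := res k hsub (subset_refl (insert v ω)) j G with hG'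
  have hG'coc : DD k D (insert v ω) j (j+1) G' = 0 := by
    rw [hG', res_comm k hD hC hsub (subset_refl _) j (j+1) rfl G, hGF]
    funext μ
    have : res k hsub (subset_refl (insert v ω)) (j+1) F μ
        = tot k C ω (j+1) g μ.1 := rfl
    rw [this]
    by_cases hvμ : v ∈ μ.1
    · refine tot_of_not k _ ?_
      rintro ⟨-, hsub2, -⟩
      exact hv (hsub2 hvμ)
    · have hμω : μ.1 ⊆ ω := fun y hy => by
        rcases Finset.mem_insert.mp (μ.2.2.1 hy) with rfl | h
        · exact absurd hy hvμ
        · exact h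
      rw [hg]
      exact (tot_dd_ext_vanish k hD hsub j f hf μ.1 μ.2.1 hμω : _)
  obtain ⟨w0, hw0⟩ := cone_contract k hD hcone (Finset.mem_insert_self v ω) j G' hG'coc
  refine ⟨res k hsub (subset_refl ω) (j-1) u + res k (subset_refl D) hωins (j-1) w0, ?_⟩
  rw [map_add, res_comm k hD hC hsub (subset_refl ω) (j-1) j (by ring) u,
    res_comm k hD hD (subset_refl D) hωins (j-1) j (by ring) w0, hu, hw0, hp]
  have hXX : res k hsub (subset_refl ω) j
        (ext k (C' := C) (ω' := ω) j f - res k (subset_refl C) hωins j G)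
      = f - res k (subset_refl D) hωins j G' := by
    funext σ
    show ext k (C' := C) (ω' := ω) j f ⟨σ.1, _⟩ - G ⟨σ.1, _⟩ = f σ - G ⟨σ.1, _⟩
    congr 1
    show tot k D ω j f σ.1 = f σ
    rw [tot_of_cond k f σ.2]
  rw [hXX, sub_add_cancel]

end CLBT
namespace CLBT
variable {m : ℕ} (k : Type*) [Field k]

/-- Nonvanishing of the `j`-th reduced cohomology, at the cochain level. -/
def Hnz (C : Set (Finset (Fin m))) (ω : Finset (Fin m)) (j : ℤ) : Prop :=
  ∃ f : CC k C ω j, DD k C ω j (j+1) f = 0 ∧ ∀ g : CC k C ω (j-1), DD k C ω (j-1) j g ≠ f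

noncomputable def ccCast {C : Set (Finset (Fin m))} {ω : Finset (Fin m)} {a a' : ℤ}
    (h : a = a') (f : CC k C ω a) : CC k C ω a' :=
  fun σ => f ⟨σ.1, σ.2.1, σ.2.2.1, by rw [h]; exact σ.2.2.2⟩

lemma dd_ccCast {C : Set (Finset (Fin m))} {ω : Finset (Fin m)} {a a' b : ℤ}
    (h : a = a') (f : CC k C ω a) :
    DD k C ω a' b (ccCast k h f) = DD k C ω a b f := by subst h; rfl

lemma dd_deg_congr {C : Set (Finset (Fin m))} {ω : Finset (Fin m)} {a b b' : ℤ}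
    (h : b = b') (f : CC k C ω a) :
    DD k C ω a b' f = ccCast k h (DD k C ω a b f) := by subst h; rfl

lemma not_hnz {C : Set (Finset (Fin m))} {ω : Finset (Fin m)} {j : ℤ}
    (h : ¬ Hnz k C ω j) :
    ∀ f : CC k C ω j, DD k C ω j (j+1) f = 0 → ∃ g, DD k C ω (j-1) j g = f := by
  intro f hf
  by_contra hng
  push_neg at hng
  exact h ⟨f, hf, hng⟩

lemma exists_witness : ∀ (T W : Finset (Fin m)), Disjoint T W →
    ∀ C : Set (Finset (Fin m)), DC C → T ∈ C → (∀ x ∈ W, insert x T ∉ C) →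
    ∃ τ : Finset (Fin m), τ ⊆ T ∧ Hnz k C (τ ∪ W) ((τ.card : ℤ) - 1) := by
  intro T
  induction T using Finset.strongInduction with
  | _ T ih =>
  intro W hTW C hC hT hmax
  rcases T.eq_empty_or_nonempty with rfl | ⟨v, hv⟩
  · -- base case : T = ∅
    refine ⟨∅, subset_rfl, ?_⟩
    have hcond : (∅ : Finset (Fin m)) ∈ C ∧ (∅ : Finset (Fin m)) ⊆ (∅ ∪ W : Finset (Fin m))
        ∧ ((∅ : Finset (Fin m)).card : ℤ) = ((∅ : Finset (Fin m)).card : ℤ) - 1 + 1 := by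
      refine ⟨hT, Finset.empty_subset _, by simp⟩
    refine ⟨fun _ => 1, ?_, ?_⟩
    · funext σ
      exfalso
      obtain ⟨hσC, hσW, hσcard⟩ := σ.2
      have hcard1 : σ.1.card = 1 := by
        have : ((∅ : Finset (Fin m)).card : ℤ) = 0 := by simp
        omega
      obtain ⟨x, hx⟩ := Finset.card_eq_one.mp hcard1
      have hxW : x ∈ W := by
        have := hσW (by rw [hx]; exact Finset.mem_singleton_self x)
        simpa using this
      exact hmax x hxW (by
        have : insert x (∅ : Finset (Fin m)) = σ.1 := by rw [hx]; simp
        rw [this]; exact hσC)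
    · intro g hg
      have := congrFun hg ⟨∅, hcond⟩
      rw [dd_apply] at this
      simp at this
  · -- inductive step
    set T' := T.erase v with hT'
    have hvT' : v ∉ T' := Finset.notMem_erase v T
    have hins : insert v T' = T := Finset.insert_erase hv
    set D : Set (Finset (Fin m)) := {σ | insert v σ ∈ C} with hD
    have hDd : DC D := by
      intro σ hσ ρ hρ
      exact hC _ hσ _ (Finset.insert_subset_insert v hρ)
    have hsubD : D ⊆ C := fun σ hσ => hC _ hσ σ (Finset.subset_insert v σ)
    have hT'D : T' ∈ D := by
      show insert v T' ∈ C
      rw [hins]; exact hT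
    have hmax' : ∀ x ∈ W, insert x T' ∉ D := by
      intro x hxW hmem
      have hxv : insert v (insert x T') = insert x T := by
        rw [Finset.insert_comm, hins]
      exact hmax x hxW (by rw [← hxv]; exact hmem)
    obtain ⟨τ, hτT', hHnz⟩ := ih T' (Finset.erase_ssubset hv) W
      (Finset.disjoint_of_subset_left (Finset.erase_subset v T) hTW) D hDd hT'D hmax'
    set j : ℤ := (τ.card : ℤ) - 1 with hj
    set ω : Finset (Fin m) := τ ∪ W with hω
    have hvω : v ∉ ω := by
      rw [hω]
      simp only [Finset.mem_union]
      rintro (h | h)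
      · exact hvT' (hτT' h)
      · exact Finset.disjoint_left.mp hTW hv h
    by_cases HC1 : Hnz k C ω j
    · exact ⟨τ, hτT'.trans (Finset.erase_subset v T), HC1⟩
    by_cases HC2 : Hnz k C (insert v ω) (j+1)
    · refine ⟨insert v τ, Finset.insert_subset hv (hτT'.trans (Finset.erase_subset v T)), ?_⟩
      have hvτ : v ∉ τ := fun h => hvT' (hτT' h)
      have h1 : insert v τ ∪ W = insert v ω := by rw [hω, Finset.insert_union]
      have h2 : ((insert v τ).card : ℤ) - 1 = j + 1 := by
        rw [Finset.card_insert_of_notMem hvτ, hj]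
        push_cast
        ring
      rw [h1, h2]
      exact HC2
    -- contradiction via the Mayer-Vietoris key lemma
    exfalso
    obtain ⟨f, hfcoc, hnotcb⟩ := hHnz
    have hstar : ∀ σ ∈ C, v ∈ σ → σ.erase v ∈ D := by
      intro σ hσ hvσ
      show insert v (σ.erase v) ∈ C
      rw [Finset.insert_erase hvσ]
      exact hσ
    have hconeD : ∀ σ ∈ D, insert v σ ∈ D := by
      intro σ hσ
      show insert v (insert v σ) ∈ C
      rw [Finset.insert_idem]
      exact hσ
    have h1 : ∀ F : CC k C (insert v ω) (j+1), DD k C (insert v ω) (j+1) (j+2) F = 0 →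
        ∃ G : CC k C (insert v ω) j, DD k C (insert v ω) j (j+1) G = F := by
      intro F hF
      have hF' : DD k C (insert v ω) (j+1) ((j+1)+1) F = 0 := by
        rw [dd_deg_congr k (show (j+2 : ℤ) = (j+1)+1 from by ring) F, hF]
        rfl
      obtain ⟨g, hgF⟩ := not_hnz k HC2 F hF'
      refine ⟨ccCast k (show ((j+1) - 1 : ℤ) = j from by ring) g, ?_⟩
      rw [dd_ccCast]
      exact hgF
    have h2 : ∀ p : CC k C ω j, DD k C ω j (j+1) p = 0 →
        ∃ u : CC k C ω (j-1), DD k C ω (j-1) j u = p := not_hnz k HC1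
    obtain ⟨w, hw⟩ := key k hC hDd hsubD hstar hconeD hvω j h1 h2 f hfcoc
    exact hnotcb w hw

end CLBT
namespace CLBT
variable {m : ℕ} {k : Type*} [Field k]

lemma hnz_redBetti {K : SimplicialComplexOn m} {ω : Finset (Fin m)} {j : ℤ}
    (h : Hnz k K.faces ω j) : 0 < redBetti K ω k j := by
  classical
  obtain ⟨f, hfcoc, hnc⟩ := h
  have hker : f ∈ LinearMap.ker (redCoboundary K ω k j (j+1)) := by
    rw [LinearMap.mem_ker, bridge]
    exact hfcoc
  haveI : FiniteDimensional k (redCochain K ω k j) := by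
    haveI : Finite {σ : Finset (Fin m) // σ ∈ K.faces ∧ σ ⊆ ω ∧ (σ.card : ℤ) = j + 1} :=
      Subtype.finite
    haveI := Fintype.ofFinite {σ : Finset (Fin m) // σ ∈ K.faces ∧ σ ⊆ ω ∧ (σ.card : ℤ) = j + 1}
    infer_instance
  haveI : FiniteDimensional k (redCohomology K ω k j) := by
    unfold redCohomology
    infer_instance
  have hnontriv : Nontrivial (redCohomology K ω k j) := by
    refine ⟨Submodule.Quotient.mk ⟨f, hker⟩, 0, ?_⟩
    intro hq
    have hq := (Submodule.Quotient.mk_eq_zero _ (x := (⟨f, hker⟩ : LinearMap.ker (redCoboundary K ω k j (j+1))))).mp hq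
    rw [Submodule.mem_comap] at hq
    obtain ⟨g, -, hg⟩ := hq
    refine hnc g ?_
    have : redCoboundary K ω k (j-1) j g = f := hg
    rw [bridge] at this
    exact this
  exact Module.finrank_pos_iff.mpr hnontriv

end CLBT

/-- For a simplicial complex `K` on `[m]` and a field `k`, the multigraded
Betti numbers `β_{i,ω} = dim_k H̃^{|ω|−i−1}(K|_ω; k)` of the Stanley–Reisner
ring (via Hochster's formula) satisfy, for every `i ≥ 0`,
`Σ_{ω ⊆ [m]} β_{i,ω} ≥ C(m − dim K − 1, i)`. -/
theorem sum_multigraded_betti_ge_choose {m : ℕ} (K : SimplicialComplexOn m)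
    (k : Type*) [Field k] (i : ℕ) :
    (m - K.dimAdd1).choose i ≤
      ∑ ω : Finset (Fin m), redBetti K ω k ((ω.card : ℤ) - i - 1) := by
  classical
  set n := K.dimAdd1 with hn
  have hSne : {n : ℕ | ∃ σ ∈ K.faces, σ.card = n}.Nonempty := ⟨0, ∅, K.empty_mem, rfl⟩
  have hSbdd : BddAbove {n : ℕ | ∃ σ ∈ K.faces, σ.card = n} := by
    refine ⟨m, ?_⟩
    rintro a ⟨σ, -, rfl⟩
    calc σ.card ≤ Fintype.card (Fin m) := Finset.card_le_univ σ
      _ = m := Fintype.card_fin m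
  obtain ⟨σ₀, hσ₀K, hσ₀card0⟩ := Nat.sSup_mem hSne hSbdd
  have hσ₀card : σ₀.card = n := hσ₀card0
  have hub : ∀ ρ ∈ K.faces, ρ.card ≤ n := fun ρ hρ => le_csSup hSbdd ⟨ρ, hρ, rfl⟩
  set F : Finset (Fin m) := σ₀ᶜ with hF
  have hFcard : F.card = m - n := by
    rw [hF, Finset.card_compl, Fintype.card_fin, hσ₀card]
  have hwit : ∀ W ∈ Finset.powersetCard i F, ∃ ω : Finset (Fin m),
      ω ∩ F = W ∧ 1 ≤ redBetti K ω k ((ω.card : ℤ) - i - 1) := by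
    intro W hW
    rw [Finset.mem_powersetCard] at hW
    obtain ⟨hWF, hWcard⟩ := hW
    have hWσ : ∀ x ∈ W, x ∉ σ₀ := by
      intro x hxW
      have := hWF hxW
      rw [hF, Finset.mem_compl] at this
      exact this
    have hdisj : Disjoint σ₀ W := Finset.disjoint_left.mpr fun a haσ haW => hWσ a haW haσ
    have hmax : ∀ x ∈ W, insert x σ₀ ∉ K.faces := by
      intro x hxW hmem
      have hcard := hub _ hmem
      rw [Finset.card_insert_of_notMem (hWσ x hxW), hσ₀card] at hcard
      omega
    obtain ⟨τ, hτσ, hHnz⟩ := CLBT.exists_witness k σ₀ W hdisj K.faces K.down_closed hσ₀K hmax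
    have hτW : Disjoint τ W := Finset.disjoint_of_subset_left hτσ hdisj
    refine ⟨τ ∪ W, ?_, ?_⟩
    · rw [Finset.union_inter_distrib_right]
      have h1 : τ ∩ F = ∅ := Finset.eq_empty_iff_forall_notMem.mpr fun x hx => by
        rw [hF, Finset.mem_inter, Finset.mem_compl] at hx
        exact hx.2 (hτσ hx.1)
      have h2 : W ∩ F = W := Finset.inter_eq_left.mpr hWF
      rw [h1, h2, Finset.empty_union]
    · have hdeg : (((τ ∪ W).card : ℤ)) - i - 1 = (τ.card : ℤ) - 1 := by
        rw [Finset.card_union_of_disjoint hτW, hWcard]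
        push_cast
        ring
      rw [hdeg]
      exact CLBT.hnz_redBetti hHnz
  choose! gw hg1 hg2 using hwit
  have hinj : Set.InjOn gw (Finset.powersetCard i F) := by
    intro W1 h1 W2 h2 heq
    have := hg1 W1 h1
    rw [heq, hg1 W2 h2] at this
    exact this.symm
  calc (m - n).choose i = (Finset.powersetCard i F).card := by
        rw [Finset.card_powersetCard, hFcard]
    _ = ∑ _W ∈ Finset.powersetCard i F, 1 := by rw [Finset.sum_const, smul_eq_mul, mul_one]
    _ ≤ ∑ W ∈ Finset.powersetCard i F,
          redBetti K (gw W) k (((gw W).card : ℤ) - i - 1) :=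
        Finset.sum_le_sum fun W hW => hg2 W hW
    _ = ∑ ω ∈ (Finset.powersetCard i F).image gw,
          redBetti K ω k ((ω.card : ℤ) - i - 1) :=
        (Finset.sum_image (f := fun ω => redBetti K ω k ((ω.card : ℤ) - i - 1))
          (fun W h1 W' h2 h => hinj h1 h2 h)).symm
    _ ≤ ∑ ω : Finset (Fin m), redBetti K ω k ((ω.card : ℤ) - i - 1) :=
        Finset.sum_le_sum_of_subset (Finset.subset_univ _)
end

section
/- Let K be a simplicial complex on [m] and α a partition of [m] nondegenerate for K. In the Koszul complex Λ_k[t₁,…,t_r] ⊗ k(K) with differential d_α(t_i) = Σ_{j∈α_i} v_j and d_α(v_j) = 0, for each L ⊆ [r] the k-submodule spanned by the elements t_I v^{(σ,h)} with σ ∈ K, supp(h) = σ, and I_α(σ) ∪ I = L is a subcomplex (is preserved by d_α), and the whole complex is the direct sum of these subcomplexes over all L ⊆ [r]. -/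
open Finset
set_option maxHeartbeats 1000000
set_option synthInstance.maxHeartbeats 1000000

open MvPolynomial in
/-- The image in `k(K)` of `Σ_{j ∈ α_i} v_j` (the image of `u_i`). -/
noncomputable def vSum {m r : ℕ} (K : SimplicialComplexOn m) (k : Type*) [Field k]
    (c : Fin m → Fin r) (i : Fin r) : SRring K k :=
  Ideal.Quotient.mk (SRideal K k)
    (∑ j ∈ Finset.univ.filter (fun j => c j = i), (X j : MvPolynomial (Fin m) k))

/-- The underlying `k`-module of the Koszul complex
`Λ_k[t₁,…,t_r] ⊗ k(K)`: an element is a finitely supported family, indexed by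
the subsets `I ⊆ [r]` (recording the exterior monomial `t_I`), of elements of
`k(K)`. -/
abbrev KoszulModule {m : ℕ} (K : SimplicialComplexOn m) (k : Type*) [Field k]
    (r : ℕ) : Type _ :=
  Finset (Fin r) →₀ SRring K k

/-- The Koszul differential `d_α` on `Λ_k[t₁,…,t_r] ⊗ k(K)`, determined by
`d_α(t_i) = Σ_{j∈α_i} v_j` and `d_α(v_j) = 0`:
`d_α(t_I ⊗ p) = Σ_{i∈I} (−1)^{|{i'∈I : i'<i}|} t_{I∖{i}} ⊗ (Σ_{j∈α_i} v_j)·p`. -/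
noncomputable def koszulDiff {m r : ℕ} (K : SimplicialComplexOn m) (k : Type*)
    [Field k] (c : Fin m → Fin r) :
    KoszulModule K k r →ₗ[k] KoszulModule K k r :=
  Finsupp.lsum k fun I : Finset (Fin r) =>
    ∑ i ∈ I, ((-1 : k) ^ (I.filter (fun y => y < i)).card) •
      ((Finsupp.lsingle (I.erase i)).comp (LinearMap.mulLeft k (vSum K k c i)))

open MvPolynomial in
/-- The `k`-submodule of `Λ_k[t₁,…,t_r] ⊗ k(K)` spanned by the basis elements
`t_I ⊗ v^{(σ,h)}` with `σ = supp(h) ∈ K` and `I_α(σ) ∪ I = L`. -/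
noncomputable def koszulSub {m r : ℕ} (K : SimplicialComplexOn m) (k : Type*)
    [Field k] (c : Fin m → Fin r) (L : Finset (Fin r)) :
    Submodule k (KoszulModule K k r) :=
  Submodule.span k {x | ∃ (I : Finset (Fin r)) (h : Fin m →₀ ℕ),
    h.support ∈ K.faces ∧ h.support.image c ∪ I = L ∧
    x = Finsupp.single I (Ideal.Quotient.mk (SRideal K k) (monomial h (1 : k)))}

/-!
The Stanley–Reisner ideal is the monomial ideal spanned by the monomials `v^h` with
`supp h ∉ K`, so `k(K)` has the `k`-basis of monomials `v^h` with `supp h ∈ K`, and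
`Λ_k[t₁,…,t_r] ⊗ k(K)` has the basis `t_I v^h`. Labelling `t_I v^h` by `I_α(supp h) ∪ I`,
the submodules of the theorem are the spans of the fibres of this labelling, hence form a
direct sum. The differential sends `t_I v^h` to a signed sum of terms `t_{I ∖ i} v_j v^h`
with `j ∈ α_i`, and `v_j v^h` is either `0` or the basis monomial `v^{h + δ_j}`, whose
label is `I_α(supp h) ∪ {i} ∪ (I ∖ {i}) = I_α(supp h) ∪ I`.
-/

open MvPolynomial

lemma Finsupp.sum_single_one_le_iff {σ : Type*} {τ : Finset σ} {u : σ →₀ ℕ} :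
    ∑ j ∈ τ, single j 1 ≤ u ↔ τ ⊆ u.support := by
  classical
  simp only [le_def, coe_finsetSum, Finset.sum_apply, single_apply, Finset.sum_ite_eq',
    Finset.subset_iff, mem_support_iff]
  refine forall_congr' fun j => ?_
  split_ifs <;> simp [*, Nat.one_le_iff_ne_zero]

section StanleyReisner

variable {m : ℕ} (K : SimplicialComplexOn m) (k : Type*) [Field k]

def faceExponents : Set (Fin m →₀ ℕ) := {u | u.support ∈ K.faces}

variable {K k} in
lemma mem_SRideal_iff {p : MvPolynomial (Fin m) k} :
    p ∈ SRideal K k ↔ ∀ u ∈ p.support, u ∉ faceExponents K := by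
  have hgen : SRideal K k = Ideal.span ((monomial · 1) ''
      ((fun τ => ∑ j ∈ τ, Finsupp.single j 1) ''
        {τ : Finset (Fin m) | τ ∉ K.faces})) := by
    rw [SRideal, Set.image_image]
    congr 1
    ext p
    simp only [Set.mem_image, Set.mem_ofPred_eq, monomial_sum_one, eq_comm (a := p)]
    rfl
  rw [hgen, mem_ideal_span_monomial_image]
  refine forall₂_congr fun u _ => ?_
  simp only [Set.mem_image, Set.mem_ofPred_eq, faceExponents, exists_exists_and_eq_and,
    Finsupp.sum_single_one_le_iff]
  exact ⟨fun ⟨τ, hτ, hτu⟩ hu => hτ (K.down_closed _ hu τ hτu),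
    fun hu => ⟨_, hu, subset_rfl⟩⟩

variable {K k} in
lemma mk_monomial_eq_zero {u : Fin m →₀ ℕ} (hu : u ∉ faceExponents K) :
    Ideal.Quotient.mk (SRideal K k) (monomial u 1) = 0 := by
  classical
  rw [Ideal.Quotient.eq_zero_iff_mem, mem_SRideal_iff, support_monomial, if_neg one_ne_zero]
  simpa using hu

lemma linearIndependent_mk_monomial :
    LinearIndependent k
      fun u : faceExponents K => Ideal.Quotient.mk (SRideal K k) (monomial u 1) := by
  classical
  rw [linearIndependent_iff']
  intro s g hg u hu
  set P : MvPolynomial (Fin m) k := ∑ w ∈ s, g w • monomial (w : Fin m →₀ ℕ) 1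
  have hP : P ∈ SRideal K k := by
    rw [← Ideal.Quotient.eq_zero_iff_mem, ← hg, map_sum]
    refine Finset.sum_congr rfl fun w _ => ?_
    rw [← Ideal.Quotient.mkₐ_eq_mk k, map_smul]
  have hcoeff : coeff u P = g u := by
    simp [P, coeff_sum, coeff_monomial, Subtype.coe_inj, hu]
  by_contra hgu
  exact mem_SRideal_iff.mp hP u (by rwa [mem_support_iff, hcoeff]) u.2

lemma span_mk_monomial_eq_top :
    ⊤ ≤ Submodule.span k
      (Set.range fun u : faceExponents K => Ideal.Quotient.mk (SRideal K k) (monomial u 1)) := by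
  rintro x -
  obtain ⟨p, rfl⟩ := Ideal.Quotient.mk_surjective x
  rw [p.as_sum, map_sum]
  refine Submodule.sum_mem _ fun u _ => ?_
  rw [← mul_one (coeff u p), ← smul_eq_mul, ← smul_monomial, ← Ideal.Quotient.mkₐ_eq_mk k,
    map_smul, Ideal.Quotient.mkₐ_eq_mk]
  by_cases hu : u ∈ faceExponents K
  · exact Submodule.smul_mem _ _ (Submodule.subset_span ⟨⟨u, hu⟩, rfl⟩)
  · rw [mk_monomial_eq_zero hu, smul_zero]
    exact zero_mem _

noncomputable def srBasis : Module.Basis (faceExponents K) k (SRring K k) :=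
  Module.Basis.mk (linearIndependent_mk_monomial K k) (span_mk_monomial_eq_top K k)

lemma srBasis_apply (u : faceExponents K) :
    srBasis K k u = Ideal.Quotient.mk (SRideal K k) (monomial u 1) :=
  Module.Basis.mk_apply ..

end StanleyReisner

theorem Module.Basis.isInternal_span_image_preimage {ι κ R M : Type*} [DecidableEq κ] [Ring R]
    [AddCommGroup M] [Module R M] (b : Module.Basis ι R M) (f : ι → κ) :
    DirectSum.IsInternal fun L => Submodule.span R (b '' (f ⁻¹' {L})) := by
  refine DirectSum.isInternal_submodule_of_iSupIndep_of_iSup_eq_top (fun L => ?_) ?_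
  · have hdisj :=
      b.linearIndependent.disjoint_span_image (disjoint_compl_right (a := f ⁻¹' {L}))
    refine hdisj.mono_right (iSup₂_le fun L' hL' => Submodule.span_mono (Set.image_mono ?_))
    intro i hi
    simp_all
  · rw [eq_top_iff, ← b.span_eq, Submodule.span_le]
    rintro _ ⟨i, rfl⟩
    exact Submodule.mem_iSup_of_mem (f i) (Submodule.subset_span ⟨i, rfl, rfl⟩)

section Koszul

variable {m r : ℕ} (K : SimplicialComplexOn m) (k : Type*) [Field k] (c : Fin m → Fin r)

noncomputable def koszulBasis :
    Module.Basis (Σ _ : Finset (Fin r), faceExponents K) k (KoszulModule K k r) :=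
  Finsupp.basis fun _ => srBasis K k

lemma koszulBasis_apply (x : Σ _ : Finset (Fin r), faceExponents K) :
    koszulBasis K k x = Finsupp.single x.1 (Ideal.Quotient.mk (SRideal K k) (monomial x.2 1)) := by
  simp [koszulBasis, Finsupp.coe_basis, srBasis_apply]

def koszulLabel (x : Σ _ : Finset (Fin r), faceExponents K) : Finset (Fin r) :=
  (x.2 : Fin m →₀ ℕ).support.image c ∪ x.1

lemma koszulSub_eq_span_koszulBasis (L : Finset (Fin r)) :
    koszulSub K k c L = Submodule.span k (koszulBasis K k '' (koszulLabel K c ⁻¹' {L})) := by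
  rw [koszulSub]
  congr 1
  ext x
  constructor
  · rintro ⟨I, u, hu, hL, rfl⟩
    exact ⟨⟨I, u, hu⟩, hL, koszulBasis_apply K k _⟩
  · rintro ⟨⟨I, u, hu⟩, hL, rfl⟩
    exact ⟨I, u, hu, hL, koszulBasis_apply K k _⟩

variable {K k c} in
lemma single_mk_monomial_mem_koszulSub {L I : Finset (Fin r)} {u : Fin m →₀ ℕ}
    (hL : u.support.image c ∪ I = L) :
    Finsupp.single I (Ideal.Quotient.mk (SRideal K k) (monomial u 1)) ∈ koszulSub K k c L := by
  by_cases hu : u ∈ faceExponents K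
  · exact Submodule.subset_span ⟨I, u, hu, hL, rfl⟩
  · rw [mk_monomial_eq_zero hu, Finsupp.single_zero]
    exact zero_mem _

lemma koszulDiff_single (I : Finset (Fin r)) (q : SRring K k) :
    koszulDiff K k c (Finsupp.single I q) =
      ∑ i ∈ I, ((-1 : k) ^ (I.filter (· < i)).card) •
        Finsupp.single (I.erase i) (vSum K k c i * q) := by
  simp [koszulDiff]

lemma vSum_mul_mk_monomial (i : Fin r) (u : Fin m →₀ ℕ) :
    vSum K k c i * Ideal.Quotient.mk (SRideal K k) (monomial u 1) =
      ∑ j ∈ univ.filter (c · = i),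
        Ideal.Quotient.mk (SRideal K k) (monomial (Finsupp.single j 1 + u) 1) := by
  simp [vSum, ← map_mul, Finset.sum_mul, monomial_single_add]

theorem koszulSub_le_comap_koszulDiff (L : Finset (Fin r)) :
    koszulSub K k c L ≤ (koszulSub K k c L).comap (koszulDiff K k c) := by
  rw [koszulSub, Submodule.span_le]
  rintro _ ⟨I, u, -, hL, rfl⟩
  rw [SetLike.mem_coe, Submodule.mem_comap, koszulDiff_single]
  refine Submodule.sum_mem _ fun i hi => Submodule.smul_mem _ _ ?_
  rw [vSum_mul_mk_monomial, Finsupp.single_finsetSum]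
  refine Submodule.sum_mem _ fun j hj => single_mk_monomial_mem_koszulSub ?_
  rw [Finsupp.support_add_eq_union, Finsupp.support_single _ one_ne_zero, image_union,
    image_singleton, (mem_filter.mp hj).2, union_assoc, ← insert_eq, ← union_insert,
    insert_erase hi, ← hL]

end Koszul

set_option synthInstance.maxHeartbeats 1000000 in
open Classical in
theorem koszulSub_subcomplex_and_isInternal_general {m r : ℕ} (K : SimplicialComplexOn m)
    (k : Type*) [Field k] (c : Fin m → Fin r) :
    (∀ L : Finset (Fin r), ∀ x ∈ koszulSub K k c L,
        koszulDiff K k c x ∈ koszulSub K k c L) ∧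
      DirectSum.IsInternal (fun L : Finset (Fin r) => koszulSub K k c L) := by
  refine ⟨fun L _ hx => koszulSub_le_comap_koszulDiff K k c L hx, ?_⟩
  simp only [koszulSub_eq_span_koszulBasis]
  exact (koszulBasis K k).isInternal_span_image_preimage (koszulLabel K c)

set_option synthInstance.maxHeartbeats 1000000 in
open Classical in
/-- In the Koszul complex `Λ_k[t₁,…,t_r] ⊗ k(K)` with differential
`d_α(t_i) = Σ_{j∈α_i} v_j`, `d_α(v_j) = 0`, for each `L ⊆ [r]` the
`k`-submodule spanned by the elements `t_I ⊗ v^{(σ,h)}` with `σ ∈ K`,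
`supp h = σ` and `I_α(σ) ∪ I = L` is preserved by `d_α`, and the whole
complex is the internal direct sum of these submodules over all `L ⊆ [r]`. -/
theorem koszulSub_subcomplex_and_isInternal {m r : ℕ} (K : SimplicialComplexOn m)
    (k : Type*) [Field k] (c : Fin m → Fin r) (hc : Function.Surjective c)
    (hnd : IsNondegenerate K c) :
    (∀ L : Finset (Fin r), ∀ x ∈ koszulSub K k c L,
        koszulDiff K k c x ∈ koszulSub K k c L) ∧
      DirectSum.IsInternal (fun L : Finset (Fin r) => koszulSub K k c L) :=
  koszulSub_subcomplex_and_isInternal_general K k c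
end

section
/- Let K be a simplicial complex on [m], α a nondegenerate partition of [m] for K with r blocks, and k a field. Suppose K is the boundary of a simplex join: K = ∂Δ^{n₁} * ⋯ * ∂Δ^{n_s} with the trivial partition α (r = m = Σ(n_i+1)). Then the sum of all multigraded Betti numbers Σ_i Σ_{ω⊆[m]} β^{k(K)}_{i,ω} equals exactly 2^{m − dim(K) − 1}, i.e., the lower bound 2^{m−dim(K)−1} is attained. -/
open Finset

namespace SBJ

variable {m : ℕ}

/-- Sign `(-1)^{#{y ∈ σ : y < x}}`. -/
def sgn (k : Type*) [Field k] (σ : Finset (Fin m)) (x : Fin m) : k :=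
  (-1 : k) ^ (σ.filter (fun y => y < x)).card

/-- The raw coboundary operator on plain functions. -/
def Dop (k : Type*) [Field k] (F : Finset (Fin m) → k) (σ : Finset (Fin m)) : k :=
  ∑ x ∈ σ, sgn k σ x * F (σ.erase x)

lemma Dop_congr {k : Type*} [Field k] {F G : Finset (Fin m) → k} {σ : Finset (Fin m)}
    (h : ∀ x ∈ σ, F (σ.erase x) = G (σ.erase x)) : Dop k F σ = Dop k G σ :=
  Finset.sum_congr rfl fun x hx => by rw [h x hx]

lemma sgn_mul_self {k : Type*} [Field k] (σ : Finset (Fin m)) (x : Fin m) :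
    sgn k σ x * sgn k σ x = 1 := by
  unfold sgn; rw [← mul_pow]; norm_num

lemma sgn_erase_not_lt {k : Type*} [Field k] (σ : Finset (Fin m)) {x v : Fin m}
    (h : ¬ x < v) : sgn k (σ.erase x) v = sgn k σ v := by
  unfold sgn
  rw [Finset.filter_erase, Finset.erase_eq_of_notMem]
  simp [h]

lemma sgn_insert_not_lt {k : Type*} [Field k] (σ : Finset (Fin m)) {x v : Fin m}
    (h : ¬ v < x) : sgn k (insert v σ) x = sgn k σ x := by
  unfold sgn
  rw [Finset.filter_insert, if_neg h]

/-- auxiliary asymmetric version of the sign identity. -/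
lemma sgn_aux {k : Type*} [Field k] (σ : Finset (Fin m)) {x y : Fin m}
    (hx : x ∈ σ) (hlt : x < y) :
    sgn k σ x * sgn k (σ.erase x) y + sgn k σ y * sgn k (σ.erase y) x = 0 := by
  have hxm : x ∈ σ.filter (fun z => z < y) := Finset.mem_filter.2 ⟨hx, hlt⟩
  obtain ⟨d, hd⟩ : ∃ d, (σ.filter (fun z => z < y)).card = d + 1 := by
    have := Finset.card_pos.2 ⟨x, hxm⟩; exact ⟨_, (Nat.succ_pred_eq_of_pos this).symm⟩
  have e1 : (σ.erase y).filter (fun z => z < x) = σ.filter (fun z => z < x) := by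
    rw [Finset.filter_erase, Finset.erase_eq_of_notMem]
    exact fun hmem => (lt_asymm hlt) (Finset.mem_filter.1 hmem).2
  have e2 : (σ.erase x).filter (fun z => z < y) = (σ.filter (fun z => z < y)).erase x :=
    Finset.filter_erase _ _ _
  unfold sgn
  rw [e1, e2, Finset.card_erase_of_mem hxm, hd, Nat.add_sub_cancel, pow_succ]
  ring

/-- both-in version of the sign cancellation. -/
lemma sgn_swap {k : Type*} [Field k] (σ : Finset (Fin m)) {x y : Fin m}
    (hx : x ∈ σ) (hy : y ∈ σ) (hxy : x ≠ y) :
    sgn k σ x * sgn k (σ.erase x) y + sgn k σ y * sgn k (σ.erase y) x = 0 := by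
  rcases hxy.lt_or_gt with h | h
  · exact sgn_aux σ hx h
  · rw [add_comm]; exact sgn_aux σ hy h

/-- mixed version: `x ∈ σ`, `v ∉ σ`. -/
lemma sgn_swap' {k : Type*} [Field k] (σ : Finset (Fin m)) {x v : Fin m}
    (hx : x ∈ σ) (hv : v ∉ σ) :
    sgn k σ x * sgn k (σ.erase x) v + sgn k σ v * sgn k (insert v σ) x = 0 := by
  have hxv : x ≠ v := fun h => hv (h ▸ hx)
  rcases hxv.lt_or_gt with h | h
  · -- x < v
    have hxm : x ∈ σ.filter (fun z => z < v) := Finset.mem_filter.2 ⟨hx, h⟩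
    obtain ⟨d, hd⟩ : ∃ d, (σ.filter (fun z => z < v)).card = d + 1 := by
      have := Finset.card_pos.2 ⟨x, hxm⟩; exact ⟨_, (Nat.succ_pred_eq_of_pos this).symm⟩
    have e1 : (insert v σ).filter (fun z => z < x) = σ.filter (fun z => z < x) := by
      rw [Finset.filter_insert, if_neg (lt_asymm h)]
    have e2 : (σ.erase x).filter (fun z => z < v) = (σ.filter (fun z => z < v)).erase x :=
      Finset.filter_erase _ _ _
    unfold sgn
    rw [e1, e2, Finset.card_erase_of_mem hxm, hd, Nat.add_sub_cancel, pow_succ]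
    ring
  · -- v < x
    have e1 : (σ.erase x).filter (fun z => z < v) = σ.filter (fun z => z < v) := by
      rw [Finset.filter_erase, Finset.erase_eq_of_notMem]
      exact fun hmem => (lt_asymm h) (Finset.mem_filter.1 hmem).2
    have e2 : (insert v σ).filter (fun z => z < x) = insert v (σ.filter (fun z => z < x)) := by
      rw [Finset.filter_insert, if_pos h]
    have hvm : v ∉ σ.filter (fun z => z < x) := fun hm => hv (Finset.mem_filter.1 hm).1
    unfold sgn
    rw [e1, e2, Finset.card_insert_of_notMem hvm, pow_succ]
    ring

/-- `Dop ∘ Dop = 0`, pure version. -/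
lemma Dop_Dop {k : Type*} [Field k] (F : Finset (Fin m) → k) (σ : Finset (Fin m)) :
    Dop k (Dop k F) σ = 0 := by
  unfold Dop
  have : ∀ x ∈ σ, sgn k σ x * ∑ y ∈ σ.erase x, sgn k (σ.erase x) y * F ((σ.erase x).erase y)
      = ∑ y ∈ σ.erase x, sgn k σ x * (sgn k (σ.erase x) y * F ((σ.erase x).erase y)) := by
    intro x _; rw [Finset.mul_sum]
  rw [Finset.sum_congr rfl this, Finset.sum_sigma' σ (fun x => σ.erase x)
    (fun x y => sgn k σ x * (sgn k (σ.erase x) y * F ((σ.erase x).erase y)))]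
  refine Finset.sum_involution (fun p _ => ⟨p.2, p.1⟩) ?_ ?_ ?_ ?_
  · rintro ⟨x, y⟩ hp
    simp only [Finset.mem_sigma] at hp
    obtain ⟨hx, hy⟩ := hp
    have hyσ : y ∈ σ := Finset.mem_of_mem_erase hy
    have hxy : x ≠ y := fun h => (Finset.notMem_erase x σ) (h ▸ hy)
    have herase : (σ.erase x).erase y = (σ.erase y).erase x := Finset.erase_right_comm
    have hkey := sgn_swap (k := k) σ hx hyσ hxy
    simp only []
    rw [herase]
    linear_combination F ((σ.erase y).erase x) * hkey
  · rintro ⟨x, y⟩ hp _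
    simp only [Finset.mem_sigma] at hp
    intro h
    have : x = y := congrArg Sigma.fst h.symm
    exact (Finset.notMem_erase x σ) (this ▸ hp.2)
  · rintro ⟨x, y⟩ hp
    simp only [Finset.mem_sigma] at hp ⊢
    have hyσ : y ∈ σ := Finset.mem_of_mem_erase hp.2
    have hxy : x ≠ y := fun h => (Finset.notMem_erase x σ) (h ▸ hp.2)
    exact ⟨hyσ, Finset.mem_erase.2 ⟨hxy, hp.1⟩⟩
  · rintro ⟨x, y⟩ _; rfl

end SBJ

namespace SBJ

variable {m : ℕ} (K : SimplicialComplexOn m) (ω : Finset (Fin m)) (k : Type*) [Field k]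

open Classical in
/-- Homotopy (cone contraction) operator on plain functions. -/
noncomputable def Hop (v : Fin m) (F : Finset (Fin m) → k) (τ : Finset (Fin m)) : k :=
  if v ∉ τ ∧ insert v τ ∈ K.faces ∧ insert v τ ⊆ ω then sgn k τ v * F (insert v τ) else 0

open Classical in
/-- Extension by zero of a cochain to all of `Finset (Fin m)`. -/
noncomputable def extC (a : ℤ) (f : redCochain K ω k a) (τ : Finset (Fin m)) : k :=
  if h : τ ∈ K.faces ∧ τ ⊆ ω ∧ (τ.card : ℤ) = a + 1 then f ⟨τ, h⟩ else 0

lemma extC_self (a : ℤ) (f : redCochain K ω k a)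
    (σ : {σ : Finset (Fin m) // σ ∈ K.faces ∧ σ ⊆ ω ∧ (σ.card : ℤ) = a + 1}) :
    extC K ω k a f σ.1 = f σ := by
  unfold extC
  rw [dif_pos σ.2]

lemma extC_zero (a : ℤ) (τ : Finset (Fin m)) : extC K ω k a (0 : redCochain K ω k a) τ = 0 := by
  unfold extC; split <;> rfl

lemma Hop_zero (v : Fin m) (τ : Finset (Fin m)) : Hop K ω k v (0 : Finset (Fin m) → k) τ = 0 := by
  unfold Hop; split <;> simp

lemma Hop_congr (v : Fin m) {F G : Finset (Fin m) → k} (τ : Finset (Fin m))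
    (h : F (insert v τ) = G (insert v τ)) : Hop K ω k v F τ = Hop K ω k v G τ := by
  unfold Hop; split <;> simp [h]

lemma coboundary_apply (a b : ℤ) (f : redCochain K ω k a)
    (σ : {σ : Finset (Fin m) // σ ∈ K.faces ∧ σ ⊆ ω ∧ (σ.card : ℤ) = b + 1}) :
    redCoboundary K ω k a b f σ = Dop k (extC K ω k a f) σ.1 := by
  show (∑ x ∈ σ.1.attach, _) = _
  rw [Dop, ← Finset.sum_attach σ.1 (fun x => sgn k σ.1 x * extC K ω k a f (σ.1.erase x))]
  refine Finset.sum_congr rfl fun x _ => ?_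
  unfold extC sgn
  split <;> simp

/-- Bundled homotopy operator, from degree `a` to degree `b` (think `b = a - 1`). -/
noncomputable def hB (v : Fin m) (a b : ℤ) (f : redCochain K ω k a) : redCochain K ω k b :=
  fun τ => Hop K ω k v (extC K ω k a f) τ.1

lemma hB_zero (v : Fin m) (a b : ℤ) : hB K ω k v a b (0 : redCochain K ω k a) = 0 := by
  funext τ
  show Hop K ω k v (extC K ω k a (0 : redCochain K ω k a)) τ.1 = 0
  rw [Hop_congr K ω k v (G := fun _ => (0:k)) τ.1 (extC_zero K ω k a _)]
  exact Hop_zero K ω k v τ.1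

/-- The condition defining the index type in the next degree down. -/
lemma erase_cond {b c : ℤ} (hbc : c = b + 1)
    {σ : {σ : Finset (Fin m) // σ ∈ K.faces ∧ σ ⊆ ω ∧ (σ.card : ℤ) = c + 1}}
    {x : Fin m} (hx : x ∈ σ.1) :
    σ.1.erase x ∈ K.faces ∧ σ.1.erase x ⊆ ω ∧ ((σ.1.erase x).card : ℤ) = b + 1 := by
  refine ⟨K.down_closed _ σ.2.1 _ (Finset.erase_subset _ _),
    (Finset.erase_subset _ _).trans σ.2.2.1, ?_⟩
  have h1 : (σ.1.erase x).card = σ.1.card - 1 := Finset.card_erase_of_mem hx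
  have h2 : 1 ≤ σ.1.card := Finset.card_pos.2 ⟨x, hx⟩
  have h3 := σ.2.2.2
  omega

/-- `δ ∘ δ = 0`. -/
lemma coboundary_coboundary (a b c : ℤ) (hab : b = a + 1) (hbc : c = b + 1)
    (f : redCochain K ω k a) :
    redCoboundary K ω k b c (redCoboundary K ω k a b f) = 0 := by
  funext σ
  rw [coboundary_apply]
  have key : ∀ x ∈ σ.1, extC K ω k b (redCoboundary K ω k a b f) (σ.1.erase x)
      = Dop k (extC K ω k a f) (σ.1.erase x) := by
    intro x hx
    unfold extC
    rw [dif_pos (erase_cond K ω hbc hx)]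
    exact coboundary_apply K ω k a b f ⟨σ.1.erase x, erase_cond K ω hbc hx⟩
  rw [Dop_congr key]
  exact Dop_Dop _ _

end SBJ

namespace SBJ

variable {m : ℕ} (K : SimplicialComplexOn m) (ω : Finset (Fin m)) (k : Type*) [Field k]

/-- Pure homotopy identity, case `v ∈ σ`. -/
lemma pure_a (F : Finset (Fin m) → k) (σ : Finset (Fin m)) (v : Fin m)
    (hσf : σ ∈ K.faces) (hσω : σ ⊆ ω) (hv : v ∈ σ) :
    Dop k (Hop K ω k v F) σ = F σ := by
  unfold Dop
  rw [Finset.sum_eq_single_of_mem v hv (fun x hx hxv => ?_)]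
  · have hcond : v ∉ σ.erase v ∧ insert v (σ.erase v) ∈ K.faces ∧ insert v (σ.erase v) ⊆ ω := by
      rw [Finset.insert_erase hv]; exact ⟨Finset.notMem_erase _ _, hσf, hσω⟩
    unfold Hop
    rw [if_pos hcond, Finset.insert_erase hv,
      sgn_erase_not_lt σ (lt_irrefl v), ← mul_assoc, sgn_mul_self, one_mul]
  · have : v ∈ σ.erase x := Finset.mem_erase.2 ⟨fun h => hxv h.symm, hv⟩
    unfold Hop
    rw [if_neg (fun hc => hc.1 this), mul_zero]

/-- Pure homotopy identity, case `v ∉ σ`, `insert v σ` is a face. -/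
lemma pure_b (F : Finset (Fin m) → k) (σ : Finset (Fin m)) (v : Fin m)
    (hv : v ∉ σ) (hf : insert v σ ∈ K.faces) (hω : insert v σ ⊆ ω) :
    Dop k (Hop K ω k v F) σ + sgn k σ v * Dop k F (insert v σ) = F σ := by
  have hσω : σ ⊆ ω := (Finset.subset_insert v σ).trans hω
  have key1 : ∀ x ∈ σ, sgn k σ x * Hop K ω k v F (σ.erase x)
      = sgn k σ x * (sgn k (σ.erase x) v * F ((insert v σ).erase x)) := by
    intro x hx
    have hxv : x ≠ v := fun h => hv (h ▸ hx)
    have e1 : insert v (σ.erase x) = (insert v σ).erase x :=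
      (Finset.erase_insert_of_ne hxv.symm).symm
    have hcond : v ∉ σ.erase x ∧ insert v (σ.erase x) ∈ K.faces ∧ insert v (σ.erase x) ⊆ ω := by
      refine ⟨fun hc => hv (Finset.mem_of_mem_erase hc), ?_, ?_⟩
      · rw [e1]; exact K.down_closed _ hf _ (Finset.erase_subset _ _)
      · rw [e1]; exact (Finset.erase_subset _ _).trans hω
    unfold Hop
    rw [if_pos hcond, e1]
  unfold Dop
  rw [Finset.sum_congr rfl key1, Finset.sum_insert hv, Finset.erase_insert hv,
    sgn_insert_not_lt σ (lt_irrefl v), mul_add, ← mul_assoc, sgn_mul_self, one_mul,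
    Finset.mul_sum]
  have key2 : ∀ x ∈ σ,
      sgn k σ x * (sgn k (σ.erase x) v * F ((insert v σ).erase x))
        + sgn k σ v * (sgn k (insert v σ) x * F ((insert v σ).erase x)) = 0 := by
    intro x hx
    have h := sgn_swap' (k := k) σ hx hv
    linear_combination F ((insert v σ).erase x) * h
  rw [add_comm (F σ), ← add_assoc, ← Finset.sum_add_distrib,
    Finset.sum_congr rfl key2]
  simp

/-- Bundled `P` operator (at degree `b`, with `c` the next degree up). -/
noncomputable def PB (v : Fin m) (b c : ℤ) (f : redCochain K ω k b) : redCochain K ω k b :=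
  fun σ => f σ - Dop k (Hop K ω k v (extC K ω k b f)) σ.1
    - Hop K ω k v (extC K ω k c (redCoboundary K ω k b c f)) σ.1

/-- `δ (hB f) σ`, rewritten through the pure operators. -/
lemma coboundary_hB_apply (v : Fin m) (a b : ℤ) (hab : b = a + 1) (f : redCochain K ω k b)
    (σ : {σ : Finset (Fin m) // σ ∈ K.faces ∧ σ ⊆ ω ∧ (σ.card : ℤ) = b + 1}) :
    redCoboundary K ω k a b (hB K ω k v b a f) σ
      = Dop k (Hop K ω k v (extC K ω k b f)) σ.1 := by
  rw [coboundary_apply]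
  refine Dop_congr (fun x hx => ?_)
  unfold extC
  rw [dif_pos (erase_cond K ω hab hx)]
  rfl

/-- `PB` agrees with `f - δ (hB f) - hB (δ f)`. -/
lemma PB_eq (v : Fin m) (a b c : ℤ) (hab : b = a + 1) (f : redCochain K ω k b) :
    PB K ω k v b c f = f - redCoboundary K ω k a b (hB K ω k v b a f)
      - hB K ω k v c b (redCoboundary K ω k b c f) := by
  funext σ
  show _ = f σ - redCoboundary K ω k a b (hB K ω k v b a f) σ - _
  rw [coboundary_hB_apply K ω k v a b hab f σ]
  rfl

/-- The fundamental homotopy identity in cases (i) and (ii). -/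
lemma homotopy_eq (v : Fin m) (hvω : v ∈ ω) (a b c : ℤ) (hab : b = a + 1) (hbc : c = b + 1)
    (f : redCochain K ω k b)
    (σ : {σ : Finset (Fin m) // σ ∈ K.faces ∧ σ ⊆ ω ∧ (σ.card : ℤ) = b + 1})
    (hcase : v ∈ σ.1 ∨ insert v σ.1 ∈ K.faces) :
    redCoboundary K ω k a b (hB K ω k v b a f) σ
      + hB K ω k v c b (redCoboundary K ω k b c f) σ = f σ := by
  rw [coboundary_hB_apply K ω k v a b hab f σ]
  rcases hcase with hv | hins
  · have h2 : hB K ω k v c b (redCoboundary K ω k b c f) σ = 0 := by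
      show Hop K ω k v _ σ.1 = 0
      unfold Hop
      rw [if_neg (fun hc => hc.1 hv)]
    rw [h2, add_zero, pure_a K ω k _ σ.1 v σ.2.1 σ.2.2.1 hv, extC_self]
  · by_cases hv : v ∈ σ.1
    · have h2 : hB K ω k v c b (redCoboundary K ω k b c f) σ = 0 := by
        show Hop K ω k v _ σ.1 = 0
        unfold Hop
        rw [if_neg (fun hc => hc.1 hv)]
      rw [h2, add_zero, pure_a K ω k _ σ.1 v σ.2.1 σ.2.2.1 hv, extC_self]
    · have hsub : insert v σ.1 ⊆ ω := Finset.insert_subset hvω σ.2.2.1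
      have hcond2 : insert v σ.1 ∈ K.faces ∧ insert v σ.1 ⊆ ω
          ∧ ((insert v σ.1).card : ℤ) = c + 1 := by
        refine ⟨hins, hsub, ?_⟩
        rw [Finset.card_insert_of_notMem hv]
        have := σ.2.2.2
        omega
      have h2 : hB K ω k v c b (redCoboundary K ω k b c f) σ
          = sgn k σ.1 v * Dop k (extC K ω k b f) (insert v σ.1) := by
        show Hop K ω k v _ σ.1 = _
        unfold Hop
        rw [if_pos ⟨hv, hins, hsub⟩]
        unfold extC
        rw [dif_pos hcond2]
        rw [coboundary_apply K ω k b c f ⟨insert v σ.1, hcond2⟩]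
        rfl
      rw [h2, pure_b K ω k _ σ.1 v hv hins hsub, extC_self]

end SBJ

namespace SBJ

variable {m : ℕ} (K : SimplicialComplexOn m) (ω : Finset (Fin m)) (k : Type*) [Field k]

/-- In cases (i)/(ii) of the homotopy, `PB` kills the cochain pointwise. -/
lemma PB_eq_zero_of (v : Fin m) (hvω : v ∈ ω) (b c : ℤ) (hbc : c = b + 1)
    (f : redCochain K ω k b)
    (σ : {σ : Finset (Fin m) // σ ∈ K.faces ∧ σ ⊆ ω ∧ (σ.card : ℤ) = b + 1})
    (hcase : v ∈ σ.1 ∨ insert v σ.1 ∈ K.faces) :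
    PB K ω k v b c f σ = 0 := by
  have hh := homotopy_eq K ω k v hvω (b - 1) b c (by ring) hbc f σ hcase
  have : PB K ω k v b c f σ = f σ - (redCoboundary K ω k (b-1) b (hB K ω k v b (b-1) f) σ
      + hB K ω k v c b (redCoboundary K ω k b c f) σ) := by
    rw [coboundary_hB_apply K ω k v (b-1) b (by ring) f σ,
      show hB K ω k v c b (redCoboundary K ω k b c f) σ
        = Hop K ω k v (extC K ω k c (redCoboundary K ω k b c f)) σ.1 from rfl]
    show _ - _ - _ = _
    ring
  rw [this, hh, sub_self]

/-- Support analysis for `PB` in the remaining case. -/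
lemma PB_support (v : Fin m) (hvω : v ∈ ω) (b c : ℤ) (hbc : c = b + 1)
    (f : redCochain K ω k b)
    (σ : {σ : Finset (Fin m) // σ ∈ K.faces ∧ σ ⊆ ω ∧ (σ.card : ℤ) = b + 1})
    (hne : PB K ω k v b c f σ ≠ 0) :
    v ∉ σ.1 ∧ insert v σ.1 ∉ K.faces ∧
      (f σ ≠ 0 ∨ ∃ x, ∃ _ : x ∈ σ.1,
        ∃ h' : insert v (σ.1.erase x) ∈ K.faces ∧ insert v (σ.1.erase x) ⊆ ω ∧
          ((insert v (σ.1.erase x)).card : ℤ) = b + 1,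
          insert v (σ.1.erase x) ∈ K.faces ∧ f ⟨insert v (σ.1.erase x), h'⟩ ≠ 0) := by
  have hv : v ∉ σ.1 := by
    by_contra hmem
    exact hne (PB_eq_zero_of K ω k v hvω b c hbc f σ (Or.inl hmem))
  have hins : insert v σ.1 ∉ K.faces := by
    by_contra hmem
    exact hne (PB_eq_zero_of K ω k v hvω b c hbc f σ (Or.inr hmem))
  refine ⟨hv, hins, ?_⟩
  by_cases hfσ : f σ = 0
  · right
    have hzero3 : Hop K ω k v (extC K ω k c (redCoboundary K ω k b c f)) σ.1 = 0 := by
      unfold Hop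
      rw [if_neg (fun hc => hins hc.2.1)]
    have hDop : Dop k (Hop K ω k v (extC K ω k b f)) σ.1 ≠ 0 := by
      intro h0
      apply hne
      show f σ - _ - _ = 0
      rw [hfσ, h0, hzero3]; ring
    obtain ⟨x, hx, hterm⟩ := Finset.exists_ne_zero_of_sum_ne_zero hDop
    have hHop : Hop K ω k v (extC K ω k b f) (σ.1.erase x) ≠ 0 :=
      fun h0 => hterm (by rw [h0, mul_zero])
    have hcond : v ∉ σ.1.erase x ∧ insert v (σ.1.erase x) ∈ K.faces
        ∧ insert v (σ.1.erase x) ⊆ ω := by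
      by_contra hc
      exact hHop (by unfold Hop; rw [if_neg hc])
    have hext : extC K ω k b f (insert v (σ.1.erase x)) ≠ 0 := by
      intro h0
      apply hHop
      unfold Hop
      rw [if_pos hcond, h0, mul_zero]
    have hcond2 : insert v (σ.1.erase x) ∈ K.faces ∧ insert v (σ.1.erase x) ⊆ ω
        ∧ ((insert v (σ.1.erase x)).card : ℤ) = b + 1 := by
      by_contra hc
      exact hext (by unfold extC; rw [dif_neg hc])
    refine ⟨x, hx, hcond2, hcond.2.1, ?_⟩
    intro h0
    apply hext
    unfold extC
    rw [dif_pos hcond2, h0]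
  · exact Or.inl hfσ

/-- Iterated `P` operator over a list of cone points. -/
noncomputable def PiterB (b c : ℤ) : List (Fin m) → redCochain K ω k b → redCochain K ω k b
  | [], f => f
  | v :: L, f => PB K ω k v b c (PiterB b c L f)

/-- `PiterB` differs from the identity by a coboundary, on cocycles. -/
lemma PiterB_sub (a b c : ℤ) (hab : b = a + 1) (hbc : c = b + 1)
    (L : List (Fin m)) (f : redCochain K ω k b)
    (hf : redCoboundary K ω k b c f = 0) :
    ∃ gg : redCochain K ω k a, PiterB K ω k b c L f = f - redCoboundary K ω k a b gg
      ∧ redCoboundary K ω k b c (PiterB K ω k b c L f) = 0 := by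
  induction L with
  | nil =>
    exact ⟨0, by rw [map_zero, sub_zero]; rfl, hf⟩
  | cons v L ih =>
    obtain ⟨gg, h1, h2⟩ := ih
    set u := PiterB K ω k b c L f with hu
    have hPB : PiterB K ω k b c (v :: L) f
        = u - redCoboundary K ω k a b (hB K ω k v b a u) := by
      show PB K ω k v b c u = _
      rw [PB_eq K ω k v a b c hab u, h2, hB_zero, sub_zero]
    refine ⟨gg + hB K ω k v b a u, ?_, ?_⟩
    · rw [hPB, h1, map_add]; ring
    · rw [hPB, map_sub, h2, coboundary_coboundary K ω k a b c hab hbc, sub_zero]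

/-- `PiterB` commutes with the coboundary. -/
lemma PiterB_comm (b c d : ℤ) (hbc : c = b + 1) (hcd : d = c + 1)
    (L : List (Fin m)) (f : redCochain K ω k b) :
    redCoboundary K ω k b c (PiterB K ω k b c L f)
      = PiterB K ω k c d L (redCoboundary K ω k b c f) := by
  induction L with
  | nil => rfl
  | cons v L ih =>
    show redCoboundary K ω k b c (PB K ω k v b c (PiterB K ω k b c L f))
      = PB K ω k v c d (PiterB K ω k c d L (redCoboundary K ω k b c f))
    rw [← ih]
    set u := PiterB K ω k b c L f with hu
    rw [PB_eq K ω k v (b-1) b c (by ring) u, PB_eq K ω k v b c d hbc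
      (redCoboundary K ω k b c u)]
    rw [map_sub, map_sub,
      coboundary_coboundary K ω k (b-1) b c (by ring) hbc,
      coboundary_coboundary K ω k b c d hbc hcd, hB_zero, sub_zero, sub_zero]

end SBJ

namespace SBJ

variable {m s : ℕ} (K : SimplicialComplexOn m) (ω : Finset (Fin m)) (k : Type*) [Field k]
  (g : Fin m → Fin s)

/-- The block of color `i`. -/
def Blk (g : Fin m → Fin s) (i : Fin s) : Finset (Fin m) :=
  Finset.univ.filter (fun j => g j = i)

lemma mem_Blk {g : Fin m → Fin s} {i : Fin s} {x : Fin m} : x ∈ Blk g i ↔ g x = i := by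
  simp [Blk]

/-- If `σ` is a face with `σ ⊆ ω`, `v ∈ ω` but `insert v σ` is not a face,
then the block of `v` minus `v` is contained in `σ`. -/
lemma blk_sub_of_not_face
    (hKf : ∀ τ : Finset (Fin m), τ ∈ K.faces ↔ ∀ i : Fin s, ¬ Blk g i ⊆ τ)
    {σ : Finset (Fin m)} (hσ : σ ∈ K.faces) {v : Fin m}
    (hins : insert v σ ∉ K.faces) : Blk g (g v) \ {v} ⊆ σ := by
  have : ∃ i, Blk g i ⊆ insert v σ := by
    by_contra hc
    push_neg at hc
    exact hins ((hKf _).2 hc)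
  obtain ⟨i, hi⟩ := this
  have hig : i = g v := by
    by_contra hne
    refine (hKf σ).1 hσ i (fun z hz => ?_)
    have hzv : z ≠ v := fun h => hne (h ▸ (mem_Blk.1 hz)).symm
    rcases Finset.mem_insert.1 (hi hz) with h | h
    · exact absurd h hzv
    · exact h
  intro z hz
  obtain ⟨hz1, hz2⟩ := Finset.mem_sdiff.1 hz
  rcases Finset.mem_insert.1 (hi (hig ▸ hz1)) with h | h
  · exact absurd h (Finset.notMem_singleton.1 hz2)
  · exact h

/-- Support property of the iterated operator. -/
lemma PiterB_support
    (hKf : ∀ τ : Finset (Fin m), τ ∈ K.faces ↔ ∀ i : Fin s, ¬ Blk g i ⊆ τ)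
    (b c : ℤ) (hbc : c = b + 1) (L : List (Fin m))
    (hLω : ∀ v ∈ L, v ∈ ω) (hp : L.Pairwise (fun u w => g u ≠ g w))
    (f : redCochain K ω k b)
    (σ : {σ : Finset (Fin m) // σ ∈ K.faces ∧ σ ⊆ ω ∧ (σ.card : ℤ) = b + 1})
    (hne : PiterB K ω k b c L f σ ≠ 0) :
    ∀ v ∈ L, v ∉ σ.1 ∧ Blk g (g v) \ {v} ⊆ σ.1 := by
  induction L generalizing σ with
  | nil => intro v hv; exact absurd hv List.not_mem_nil
  | cons v L ih =>
    have hne' : PB K ω k v b c (PiterB K ω k b c L f) σ ≠ 0 := hne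
    have hvω : v ∈ ω := hLω v List.mem_cons_self
    obtain ⟨hvnot, hins, hor⟩ := PB_support K ω k v hvω b c hbc _ σ hne'
    have hBsub : Blk g (g v) \ {v} ⊆ σ.1 := blk_sub_of_not_face K g hKf σ.2.1 hins
    have hpv : ∀ w ∈ L, g v ≠ g w := (List.pairwise_cons.1 hp).1
    intro w hw
    rcases List.mem_cons.1 hw with rfl | hwL
    · exact ⟨hvnot, hBsub⟩
    rcases hor with hu | ⟨x, hx, h', hface, hval⟩
    · exact ih (fun z hz => hLω z (List.mem_cons_of_mem v hz))
        (List.pairwise_cons.1 hp).2 σ hu w hwL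
    · -- transfer from σ' = insert v (σ.erase x)
      set σ' : {σ : Finset (Fin m) // σ ∈ K.faces ∧ σ ⊆ ω ∧ (σ.card : ℤ) = b + 1} :=
        ⟨insert v (σ.1.erase x), h'⟩ with hσ'
      have hres := ih (fun z hz => hLω z (List.mem_cons_of_mem v hz))
        (List.pairwise_cons.1 hp).2 σ' hval w hwL
      obtain ⟨hwnot, hwsub⟩ := hres
      -- x belongs to the block of v
      have hgx : g x = g v := by
        have : ¬ Blk g (g v) ⊆ σ'.1 := (hKf _).1 σ'.2.1 (g v)
        obtain ⟨u', hu1, hu2⟩ := Finset.not_subset.1 this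
        have hu'v : u' ≠ v := fun h => hu2 (h ▸ Finset.mem_insert_self v _)
        have hu'σ : u' ∈ σ.1 := hBsub (Finset.mem_sdiff.2 ⟨hu1, by simpa using hu'v⟩)
        by_contra hxne
        have hu'x : u' = x := by
          by_contra hne2
          exact hu2 (Finset.mem_insert_of_mem (Finset.mem_erase.2 ⟨hne2, hu'σ⟩))
        exact hxne (hu'x ▸ mem_Blk.1 hu1)
      have hgwv : g w ≠ g v := fun h => (hpv w hwL) h.symm
      have hwv : w ≠ v := fun h => hgwv (h ▸ rfl)
      have hwx : w ≠ x := fun h => hgwv (h ▸ hgx)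
      constructor
      · intro hwσ
        exact hwnot (Finset.mem_insert_of_mem (Finset.mem_erase.2 ⟨hwx, hwσ⟩))
      · intro z hz
        have hz' : z ∈ σ'.1 := hwsub hz
        have hzw : g z = g w := mem_Blk.1 (Finset.mem_sdiff.1 hz).1
        have hzv : z ≠ v := fun h => hgwv ((h ▸ hzw).symm)
        rcases Finset.mem_insert.1 hz' with h | h
        · exact absurd h hzv
        · exact Finset.mem_of_mem_erase h

/-- If the cochain is the indicator of `σ✶` and `v` is a cone point with
`v ∉ σ✶`, `insert v σ✶` not a face, then `PB` fixes the indicator. -/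
lemma PB_indicator (b c : ℤ) (hbc : c = b + 1) (v : Fin m) (hvω : v ∈ ω)
    (σs : Finset (Fin m)) (hv1 : v ∉ σs) (hv2 : insert v σs ∉ K.faces) :
    PB K ω k v b c (fun σ => if σ.1 = σs then (1:k) else 0)
      = (fun σ => if σ.1 = σs then (1:k) else 0) := by
  funext σ
  set E : redCochain K ω k b := fun σ => if σ.1 = σs then (1:k) else 0 with hE
  by_cases hcase : v ∈ σ.1 ∨ insert v σ.1 ∈ K.faces
  · rw [PB_eq_zero_of K ω k v hvω b c hbc E σ hcase]
    have : σ.1 ≠ σs := by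
      rintro rfl
      rcases hcase with h | h
      · exact hv1 h
      · exact hv2 h
    rw [if_neg this]
  · push_neg at hcase
    obtain ⟨hvnot, hins⟩ := hcase
    have h3 : Hop K ω k v (extC K ω k c (redCoboundary K ω k b c E)) σ.1 = 0 := by
      unfold Hop
      rw [if_neg (fun hc => hins hc.2.1)]
    have h2 : Dop k (Hop K ω k v (extC K ω k b E)) σ.1 = 0 := by
      unfold Dop
      refine Finset.sum_eq_zero (fun x hx => ?_)
      have : Hop K ω k v (extC K ω k b E) (σ.1.erase x) = 0 := by
        unfold Hop
        split
        · next hc =>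
          have : extC K ω k b E (insert v (σ.1.erase x)) = 0 := by
            unfold extC
            split
            · next hc2 =>
              have : insert v (σ.1.erase x) ≠ σs := fun h =>
                hv1 (h ▸ Finset.mem_insert_self v _)
              simp only [hE]
              rw [if_neg this]
            · rfl
          rw [this, mul_zero]
        · rfl
      rw [this, mul_zero]
    show E σ - _ - _ = E σ
    rw [h2, h3, sub_zero, sub_zero]

/-- finrank of the cohomology vanishes if every cocycle is a coboundary. -/
lemma redBetti_eq_zero_of_exists (j : ℤ)
    (h : ∀ f : redCochain K ω k j, redCoboundary K ω k j (j+1) f = 0 →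
      ∃ g0 : redCochain K ω k (j-1), redCoboundary K ω k (j-1) j g0 = f) :
    redBetti K ω k j = 0 := by
  have htop : Submodule.comap (LinearMap.ker (redCoboundary K ω k j (j + 1))).subtype
      (Submodule.map (redCoboundary K ω k (j - 1) j) ⊤) = ⊤ := by
    rw [Submodule.eq_top_iff']
    intro x
    obtain ⟨g0, hg0⟩ := h x.1 (LinearMap.mem_ker.1 x.2)
    exact Submodule.mem_comap.2 (Submodule.mem_map.2 ⟨g0, Submodule.mem_top, hg0⟩)
  have : Subsingleton (redCohomology K ω k j) := by
    unfold redCohomology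
    exact Submodule.Quotient.subsingleton_iff.2 htop
  exact Module.finrank_zero_of_subsingleton

end SBJ

namespace SBJ

variable {m s : ℕ} (K : SimplicialComplexOn m) (ω : Finset (Fin m)) (k : Type*) [Field k]
  (g : Fin m → Fin s)

/-- Cone case: all Betti numbers vanish. -/
lemma cone_betti
    (hKf : ∀ τ : Finset (Fin m), τ ∈ K.faces ↔ ∀ i : Fin s, ¬ Blk g i ⊆ τ)
    (v : Fin m) (hvω : v ∈ ω) (hnb : ¬ Blk g (g v) ⊆ ω) (j : ℤ) :
    redBetti K ω k j = 0 := by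
  apply redBetti_eq_zero_of_exists
  intro f hf
  refine ⟨hB K ω k v j (j-1) f, ?_⟩
  funext σ
  have hcase : v ∈ σ.1 ∨ insert v σ.1 ∈ K.faces := by
    by_cases hv : v ∈ σ.1
    · exact Or.inl hv
    · refine Or.inr ((hKf _).2 (fun i hsub => ?_))
      by_cases hi : i = g v
      · exact hnb (subset_trans (hi ▸ hsub) (Finset.insert_subset hvω σ.2.2.1))
      · refine (hKf σ.1).1 σ.2.1 i (fun z hz => ?_)
        have hzv : z ≠ v := fun h => hi ((h ▸ mem_Blk.1 hz) : g v = i).symm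
        rcases Finset.mem_insert.1 (hsub hz) with h | h
        · exact absurd h hzv
        · exact h
  have hh := homotopy_eq K ω k v hvω (j-1) j (j+1) (by ring) rfl f σ hcase
  rw [hf, hB_zero] at hh
  simpa using hh

/-- Iterated indicator fixing. -/
lemma PiterB_indicator (b c : ℤ) (hbc : c = b + 1) (σs : Finset (Fin m))
    (L : List (Fin m)) (hL : ∀ v ∈ L, v ∈ ω ∧ v ∉ σs ∧ insert v σs ∉ K.faces) :
    PiterB K ω k b c L (fun σ => if σ.1 = σs then (1:k) else 0)
      = (fun σ => if σ.1 = σs then (1:k) else 0) := by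
  induction L with
  | nil => rfl
  | cons v L ih =>
    show PB K ω k v b c (PiterB K ω k b c L _) = _
    rw [ih (fun z hz => hL z (List.mem_cons_of_mem v hz))]
    obtain ⟨h1, h2, h3⟩ := hL v List.mem_cons_self
    exact PB_indicator K ω k b c hbc v h1 σs h2 h3

/-- Sphere case: the Betti numbers of a union of blocks. -/
lemma sphere_betti
    (hKf : ∀ τ : Finset (Fin m), τ ∈ K.faces ↔ ∀ i : Fin s, ¬ Blk g i ⊆ τ)
    (vc : Fin s → Fin m) (hvc : ∀ i, g (vc i) = i)
    (hsat : ∀ v ∈ ω, Blk g (g v) ⊆ ω) (j : ℤ) :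
    redBetti K ω k j
      = if j = (ω.card : ℤ) - ((ω.image g).card : ℤ) - 1 then 1 else 0 := by
  classical
  set T : Finset (Fin s) := ω.image g with hT
  set V : Finset (Fin m) := T.image vc with hV
  set σs : Finset (Fin m) := ω \ V with hσs
  set L : List (Fin m) := T.toList.map vc with hL
  -- basic facts
  have hmemω : ∀ v : Fin m, v ∈ ω ↔ g v ∈ T := by
    intro v
    constructor
    · exact fun h => Finset.mem_image_of_mem g h
    · intro h
      obtain ⟨u, hu, hgu⟩ := Finset.mem_image.1 h
      exact hsat u hu (mem_Blk.2 hgu.symm)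
  have hinj : Function.Injective vc := fun a b h => by
    rw [← hvc a, ← hvc b, h]
  have hvcω : ∀ i ∈ T, vc i ∈ ω := by
    intro i hi
    obtain ⟨u, hu, hgu⟩ := Finset.mem_image.1 hi
    exact hsat u hu (mem_Blk.2 (by rw [hvc, hgu]))
  have hVω : V ⊆ ω := by
    intro z hz
    obtain ⟨i, hi, rfl⟩ := Finset.mem_image.1 hz
    exact hvcω i hi
  have hVcard : V.card = T.card := Finset.card_image_of_injective T hinj
  have hσscard : (σs.card : ℤ) = (ω.card : ℤ) - (T.card : ℤ) := by
    have h1 : σs.card = ω.card - V.card := Finset.card_sdiff_of_subset hVω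
    have h2 : V.card ≤ ω.card := Finset.card_le_card hVω
    omega
  have hblkT : ∀ i ∈ T, Blk g i \ {vc i} ⊆ σs := by
    intro i hi z hz
    obtain ⟨hz1, hz2⟩ := Finset.mem_sdiff.1 hz
    have hgz : g z = i := mem_Blk.1 hz1
    have hzω : z ∈ ω := (hmemω z).2 (hgz ▸ hi)
    refine Finset.mem_sdiff.2 ⟨hzω, fun hzV => ?_⟩
    obtain ⟨i', _, hi'⟩ := Finset.mem_image.1 hzV
    have : i' = i := by rw [← hgz, ← hi', hvc]
    exact (Finset.notMem_singleton.1 hz2) (by rw [← hi', this])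
  have hσsface : σs ∈ K.faces := by
    refine (hKf σs).2 (fun i hsub => ?_)
    have hw : vc i ∈ σs := hsub (mem_Blk.2 (hvc i))
    obtain ⟨hw1, hw2⟩ := Finset.mem_sdiff.1 hw
    have hiT : i ∈ T := by
      have := (hmemω (vc i)).1 hw1
      rwa [hvc] at this
    exact hw2 (Finset.mem_image_of_mem vc hiT)
  have hLmem : ∀ v : Fin m, v ∈ L ↔ ∃ i ∈ T, vc i = v := by
    intro v
    simp [hL, List.mem_map, Finset.mem_toList]
  have hLω : ∀ v ∈ L, v ∈ ω := by
    intro v hv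
    obtain ⟨i, hi, rfl⟩ := (hLmem v).1 hv
    exact hvcω i hi
  have hLpair : L.Pairwise (fun u w => g u ≠ g w) := by
    rw [hL, List.pairwise_map]
    refine List.Pairwise.imp ?_ T.nodup_toList
    intro a b hab
    rw [hvc, hvc]
    exact hab
  have hLnot : ∀ v ∈ L, v ∉ σs := by
    intro v hv hvσ
    obtain ⟨i, hi, rfl⟩ := (hLmem v).1 hv
    exact (Finset.mem_sdiff.1 hvσ).2 (Finset.mem_image_of_mem vc hi)
  have hLins : ∀ v ∈ L, insert v σs ∉ K.faces := by
    intro v hv hface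
    obtain ⟨i, hi, rfl⟩ := (hLmem v).1 hv
    refine (hKf _).1 hface i (fun z hz => ?_)
    by_cases hzv : z = vc i
    · exact hzv ▸ Finset.mem_insert_self _ _
    · exact Finset.mem_insert_of_mem (hblkT i hi (Finset.mem_sdiff.2 ⟨hz, by simpa using hzv⟩))
  -- every nonzero value of `PiterB` forces the simplex to be `σs`
  have hforce : ∀ (b c : ℤ), c = b + 1 → ∀ (f : redCochain K ω k b)
      (σ : {σ : Finset (Fin m) // σ ∈ K.faces ∧ σ ⊆ ω ∧ (σ.card : ℤ) = b + 1}),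
      PiterB K ω k b c L f σ ≠ 0 → σ.1 = σs := by
    intro b c hbc f σ hne
    have hsupp := PiterB_support K ω k g hKf b c hbc L hLω hLpair f σ hne
    apply Finset.Subset.antisymm
    · intro z hz
      refine Finset.mem_sdiff.2 ⟨σ.2.2.1 hz, fun hzV => ?_⟩
      obtain ⟨i, hi, rfl⟩ := Finset.mem_image.1 hzV
      exact (hsupp (vc i) ((hLmem _).2 ⟨i, hi, rfl⟩)).1 hz
    · intro z hz
      obtain ⟨hz1, hz2⟩ := Finset.mem_sdiff.1 hz
      have hgz : g z ∈ T := (hmemω z).1 hz1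
      have hmem : vc (g z) ∈ L := (hLmem _).2 ⟨g z, hgz, rfl⟩
      have := (hsupp _ hmem).2
      rw [hvc] at this
      refine this (Finset.mem_sdiff.2 ⟨mem_Blk.2 rfl, fun hzs => ?_⟩)
      exact hz2 (by
        rw [Finset.mem_singleton.1 hzs]
        exact Finset.mem_image_of_mem vc hgz)
  -- face cardinality bound
  have hfacecard : ∀ τ ∈ K.faces, τ ⊆ ω → τ.card + T.card ≤ ω.card := by
    intro τ hτ hτω
    have hωcard : ω.card = ∑ i ∈ T, (ω.filter (fun a => g a = i)).card :=
      Finset.card_eq_sum_card_fiberwise (fun x hx => (hmemω x).1 hx)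
    have hτcard : τ.card = ∑ i ∈ T, (τ.filter (fun a => g a = i)).card :=
      Finset.card_eq_sum_card_fiberwise (fun x hx => (hmemω x).1 (hτω hx))
    have hper : ∀ i ∈ T, (τ.filter (fun a => g a = i)).card + 1
        ≤ (ω.filter (fun a => g a = i)).card := by
      intro i hi
      have hsub : τ.filter (fun a => g a = i) ⊂ ω.filter (fun a => g a = i) := by
        refine Finset.ssubset_iff_of_subset (fun z hz => Finset.mem_filter.2
          ⟨hτω (Finset.mem_filter.1 hz).1, (Finset.mem_filter.1 hz).2⟩) |>.2 ?_
        obtain ⟨w, hw1, hw2⟩ := Finset.not_subset.1 ((hKf τ).1 hτ i)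
        have hgw : g w = i := mem_Blk.1 hw1
        refine ⟨w, Finset.mem_filter.2 ⟨(hmemω w).2 (hgw ▸ hi), hgw⟩, fun hmem => ?_⟩
        exact hw2 (Finset.mem_filter.1 hmem).1
      exact Nat.succ_le_of_lt (Finset.card_lt_card hsub)
    calc τ.card + T.card = ∑ i ∈ T, ((τ.filter (fun a => g a = i)).card + 1) := by
          rw [Finset.sum_add_distrib, Finset.sum_const, smul_eq_mul, mul_one, hτcard]
      _ ≤ ∑ i ∈ T, (ω.filter (fun a => g a = i)).card := Finset.sum_le_sum hper
      _ = ω.card := hωcard.symm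
  -- every cochain in top degree is a cocycle
  have hker : ∀ f : redCochain K ω k ((ω.card : ℤ) - (T.card : ℤ) - 1),
      redCoboundary K ω k ((ω.card : ℤ) - (T.card : ℤ) - 1)
        (((ω.card : ℤ) - (T.card : ℤ) - 1) + 1) f = 0 := by
    intro f
    funext σ'
    exfalso
    have h1 := hfacecard σ'.1 σ'.2.1 σ'.2.2.1
    have h2 := σ'.2.2.2
    omega
  by_cases hj : j = (ω.card : ℤ) - ((ω.image g).card : ℤ) - 1
  · rw [if_pos hj]
    subst hj
    have hcond_s : σs ∈ K.faces ∧ σs ⊆ ω ∧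
        ((σs.card : ℤ) = ((ω.card : ℤ) - ((ω.image g).card : ℤ) - 1) + 1) := by
      refine ⟨hσsface, Finset.sdiff_subset, by rw [hσscard]; push_cast; ring⟩
    set j := (ω.card : ℤ) - ((ω.image g).card : ℤ) - 1 with hjdef
    set E : redCochain K ω k j := fun σ => if σ.1 = σs then (1:k) else 0 with hE
    have hEker : redCoboundary K ω k j (j+1) E = 0 := hker E
    have hEne : ¬ ∃ gg : redCochain K ω k (j-1), redCoboundary K ω k (j-1) j gg = E := by
      rintro ⟨gg, hgg⟩
      have hPgg : PiterB K ω k (j-1) j L gg = 0 := by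
        funext τ
        by_contra hne
        have := hforce (j-1) j (by ring) gg τ hne
        have h2 := τ.2.2.2
        rw [this] at h2
        omega
      have h1 : PiterB K ω k j (j+1) L E = 0 := by
        rw [← hgg, ← PiterB_comm K ω k (j-1) j (j+1) (by ring) rfl, hPgg, map_zero]
      have h2 : PiterB K ω k j (j+1) L E = E :=
        PiterB_indicator K ω k j (j+1) rfl σs L
          (fun v hv => ⟨hLω v hv, hLnot v hv, hLins v hv⟩)
      have := congrFun (h2.symm.trans h1) ⟨σs, hcond_s⟩
      simp [hE] at this
    -- now compute the finrank
    show Module.finrank k (redCohomology K ω k j) = 1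
    have hEmem : E ∈ LinearMap.ker (redCoboundary K ω k j (j + 1)) :=
      LinearMap.mem_ker.2 hEker
    set p := Submodule.comap (LinearMap.ker (redCoboundary K ω k j (j + 1))).subtype
      (Submodule.map (redCoboundary K ω k (j - 1) j) ⊤) with hp
    have hx0 : (Submodule.Quotient.mk ⟨E, hEmem⟩ : redCohomology K ω k j) ≠ 0 := by
      intro h0
      have := (Submodule.Quotient.mk_eq_zero p).1 h0
      obtain ⟨gg, -, hgg⟩ := Submodule.mem_map.1 (Submodule.mem_comap.1 this)
      exact hEne ⟨gg, hgg⟩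
    have hspan : ∀ w : redCohomology K ω k j,
        ∃ c : k, c • (Submodule.Quotient.mk ⟨E, hEmem⟩ : redCohomology K ω k j) = w := by
      intro w
      obtain ⟨⟨f, hfker⟩, rfl⟩ := Submodule.Quotient.mk_surjective p w
      obtain ⟨gg, heq, -⟩ := PiterB_sub K ω k (j-1) j (j+1) (by ring) rfl L f
        (LinearMap.mem_ker.1 hfker)
      set cc := PiterB K ω k j (j+1) L f ⟨σs, hcond_s⟩ with hcc
      have hPit : PiterB K ω k j (j+1) L f = cc • E := by
        funext σ
        by_cases hσ : σ.1 = σs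
        · have hσeq : σ = ⟨σs, hcond_s⟩ := Subtype.ext hσ
          rw [hσeq]
          show cc = (cc • E) ⟨σs, hcond_s⟩
          have hone : E ⟨σs, hcond_s⟩ = 1 := if_pos rfl
          rw [Pi.smul_apply, hone, smul_eq_mul, mul_one]
        · have hz : PiterB K ω k j (j+1) L f σ = 0 := by
            by_contra hne
            exact hσ (hforce j (j+1) rfl f σ hne)
          rw [hz, Pi.smul_apply, hE]
          show (0:k) = cc • (if σ.1 = σs then (1:k) else 0)
          rw [if_neg hσ, smul_zero]
      refine ⟨cc, ?_⟩
      rw [← Submodule.Quotient.mk_smul]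
      refine (Submodule.Quotient.eq p).2 ?_
      have hdiff : cc • E - f = redCoboundary K ω k (j-1) j (-gg) := by
        rw [map_neg, ← hPit, heq]
        ring
      refine Submodule.mem_comap.2 (Submodule.mem_map.2 ⟨-gg, Submodule.mem_top, ?_⟩)
      show redCoboundary K ω k (j-1) j (-gg) = _
      rw [← hdiff]
      rfl
    exact finrank_eq_one _ hx0 hspan
  · rw [if_neg hj]
    apply redBetti_eq_zero_of_exists
    intro f hf
    obtain ⟨gg, heq, -⟩ := PiterB_sub K ω k (j-1) j (j+1) (by ring) rfl L f hf
    have hPz : PiterB K ω k j (j+1) L f = 0 := by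
      funext σ
      by_contra hne
      have hσeq := hforce j (j+1) rfl f σ hne
      have h2 := σ.2.2.2
      rw [hσeq] at h2
      have h4 : (T.card : ℤ) = ((ω.image g).card : ℤ) := by rw [hT]
      exact hj (by omega)
    rw [hPz] at heq
    exact ⟨gg, (eq_of_sub_eq_zero heq.symm).symm⟩

end SBJ

/-- **Sharpness of the bound.** Suppose `K` is the join of boundaries of
simplices, `K = ∂Δ^{n₁} * ⋯ * ∂Δ^{n_s}`: the vertex set `[m]`
(`m = Σ (n_i + 1)`) is grouped by `g : Fin m → Fin s` into blocks of sizes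
`n_i + 1 ≥ 2`, and the faces of `K` are exactly the vertex sets meeting no
block in the full block.  Then, with the trivial partition, the sum of all
multigraded Betti numbers `Σ_i Σ_{ω⊆[m]} β_{i,ω}`, i.e. the total reduced
cohomology `Σ_i Σ_ω dim_k H̃^{|ω|−i−1}(K|_ω; k)` of all full subcomplexes,
equals exactly `2^{m − dim K − 1}` (and `m − dim K − 1 = s`). -/
theorem total_betti_of_join_of_boundaries {m s : ℕ} (K : SimplicialComplexOn m)
    (k : Type*) [Field k] (g : Fin m → Fin s) (n : Fin s → ℕ)
    (hn : ∀ i, 1 ≤ n i)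
    (hblock : ∀ i : Fin s, (Finset.univ.filter (fun j => g j = i)).card = n i + 1)
    (hK : K.faces = {σ : Finset (Fin m) |
      ∀ i : Fin s, ¬ Finset.univ.filter (fun j => g j = i) ⊆ σ}) :
    ∑ i ∈ Finset.range (m + 2), ∑ ω : Finset (Fin m),
        redBetti K ω k ((ω.card : ℤ) - i - 1) = 2 ^ (m - K.dimAdd1) := by
  classical
  -- choose a representative vertex in each block
  have hex : ∀ i : Fin s, ∃ v : Fin m, g v = i := by
    intro i
    have hpos : 0 < (Finset.univ.filter (fun j => g j = i)).card := by
      rw [hblock i]; omega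
    obtain ⟨v, hv⟩ := Finset.card_pos.1 hpos
    exact ⟨v, (Finset.mem_filter.1 hv).2⟩
  choose vc hvc using hex
  have hinj : Function.Injective vc := fun a b h => by rw [← hvc a, ← hvc b, h]
  have hKf : ∀ τ : Finset (Fin m), τ ∈ K.faces ↔ ∀ i : Fin s, ¬ SBJ.Blk g i ⊆ τ := by
    intro τ
    rw [hK]
    exact Iff.rfl
  -- m = (∑ i, n i) + s
  have hm : m = (∑ i : Fin s, n i) + s := by
    have h0 : m = ∑ i : Fin s, (Finset.univ.filter (fun j => g j = i)).card := by
      calc m = Fintype.card (Fin m) := (Fintype.card_fin m).symm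
        _ = (Finset.univ : Finset (Fin m)).card := Finset.card_univ.symm
        _ = ∑ i : Fin s, (Finset.univ.filter (fun j => g j = i)).card :=
          Finset.card_eq_sum_card_fiberwise (fun x _ => Finset.mem_univ _)
    have h1 : ∑ i : Fin s, (Finset.univ.filter (fun j => g j = i)).card
        = ∑ i : Fin s, (n i + 1) := Finset.sum_congr rfl fun i _ => hblock i
    have h2 : ∑ i : Fin s, (n i + 1) = (∑ i : Fin s, n i) + s := by
      rw [Finset.sum_add_distrib, Finset.sum_const, Finset.card_univ, Fintype.card_fin,
        smul_eq_mul, mul_one]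
    rw [h0, h1, h2]
  -- the dimension computation
  have hdim : K.dimAdd1 = m - s := by
    have hmem : m - s ∈ {p : ℕ | ∃ σ ∈ K.faces, σ.card = p} := by
      refine ⟨Finset.univ \ Finset.univ.image vc, ?_, ?_⟩
      · refine (hKf _).2 (fun i hsub => ?_)
        have h1 : vc i ∈ SBJ.Blk g i := SBJ.mem_Blk.2 (hvc i)
        have h2 := hsub h1
        exact (Finset.mem_sdiff.1 h2).2
          (Finset.mem_image_of_mem vc (Finset.mem_univ i))
      · rw [Finset.card_sdiff_of_subset (Finset.subset_univ _), Finset.card_univ, Fintype.card_fin,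
          Finset.card_image_of_injective _ hinj, Finset.card_univ, Fintype.card_fin]
    have hub : ∀ p ∈ {p : ℕ | ∃ σ ∈ K.faces, σ.card = p}, p ≤ m - s := by
      rintro p ⟨σ, hσ, rfl⟩
      have h0 : σ.card = ∑ i : Fin s, (σ.filter (fun j => g j = i)).card :=
        Finset.card_eq_sum_card_fiberwise (fun x _ => Finset.mem_univ _)
      have h1 : ∀ i : Fin s, (σ.filter (fun j => g j = i)).card ≤ n i := by
        intro i
        have hss : σ.filter (fun j => g j = i) ⊂ Finset.univ.filter (fun j => g j = i) := by
          refine Finset.ssubset_iff_of_subset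
            (fun z hz => Finset.mem_filter.2 ⟨Finset.mem_univ _, (Finset.mem_filter.1 hz).2⟩)
            |>.2 ?_
          obtain ⟨w, hw1, hw2⟩ := Finset.not_subset.1 ((hKf σ).1 hσ i)
          exact ⟨w, hw1, fun hmem => hw2 (Finset.mem_filter.1 hmem).1⟩
        have := Finset.card_lt_card hss
        rw [hblock i] at this
        omega
      have h2 : σ.card ≤ ∑ i : Fin s, n i := h0 ▸ Finset.sum_le_sum (fun i _ => h1 i)
      omega
    exact IsGreatest.csSup_eq ⟨hmem, fun p hp => hub p hp⟩
  -- per-ω inner sums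
  rw [Finset.sum_comm]
  have hinner : ∀ ω : Finset (Fin m),
      (∑ i ∈ Finset.range (m+2), redBetti K ω k ((ω.card:ℤ) - i - 1))
        = if (∀ v ∈ ω, SBJ.Blk g (g v) ⊆ ω) then 1 else 0 := by
    intro ω
    by_cases hsat : ∀ v ∈ ω, SBJ.Blk g (g v) ⊆ ω
    · rw [if_pos hsat]
      have hbett : ∀ i ∈ Finset.range (m+2), redBetti K ω k ((ω.card:ℤ) - i - 1)
          = if i = (ω.image g).card then 1 else 0 := by
        intro i _
        rw [SBJ.sphere_betti K ω k g hKf vc hvc hsat]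
        by_cases h : i = (ω.image g).card
        · rw [if_pos h, if_pos (by rw [h])]
        · rw [if_neg h, if_neg (fun hc => h (by exact_mod_cast (by omega :
            (i : ℤ) = ((ω.image g).card : ℤ))))]
      rw [Finset.sum_congr rfl hbett,
        Finset.sum_ite_eq' (Finset.range (m+2)) ((ω.image g).card) (fun _ => (1:ℕ))]
      rw [if_pos]
      rw [Finset.mem_range]
      have h1 : (ω.image g).card ≤ ω.card := Finset.card_image_le
      have h2 : ω.card ≤ m := by
        have := Finset.card_le_univ ω
        simpa [Finset.card_univ] using this
      omega
    · rw [if_neg hsat]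
      push_neg at hsat
      obtain ⟨v, hvω, hnb⟩ := hsat
      exact Finset.sum_eq_zero fun i _ => SBJ.cone_betti K ω k g hKf v hvω hnb _
  rw [Finset.sum_congr rfl (fun ω _ => hinner ω)]
  -- count saturated subsets
  have hcount : ∑ ω : Finset (Fin m), (if (∀ v ∈ ω, SBJ.Blk g (g v) ⊆ ω) then 1 else 0)
      = (Finset.univ.filter (fun ω : Finset (Fin m) => ∀ v ∈ ω, SBJ.Blk g (g v) ⊆ ω)).card := by
    rw [Finset.sum_boole]
    exact Nat.cast_id _
  rw [hcount]
  have hbij : (Finset.univ : Finset (Finset (Fin s))).card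
      = (Finset.univ.filter (fun ω : Finset (Fin m) => ∀ v ∈ ω, SBJ.Blk g (g v) ⊆ ω)).card := by
    refine Finset.card_bij (fun T _ => Finset.univ.filter (fun j => g j ∈ T)) ?_ ?_ ?_
    · intro T _
      refine Finset.mem_filter.2 ⟨Finset.mem_univ _, fun v hv z hz => ?_⟩
      refine Finset.mem_filter.2 ⟨Finset.mem_univ _, ?_⟩
      rw [SBJ.mem_Blk.1 hz]
      exact (Finset.mem_filter.1 hv).2
    · intro T1 _ T2 _ heq
      ext i
      have h1 : vc i ∈ Finset.univ.filter (fun j => g j ∈ T1)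
          ↔ vc i ∈ Finset.univ.filter (fun j => g j ∈ T2) := by rw [heq]
      simpa [Finset.mem_filter, hvc] using h1
    · intro ω hω
      refine ⟨ω.image g, Finset.mem_univ _, ?_⟩
      have hsat := (Finset.mem_filter.1 hω).2
      ext u
      simp only [Finset.mem_filter, Finset.mem_univ, true_and]
      constructor
      · intro hu
        obtain ⟨w, hw, hgw⟩ := Finset.mem_image.1 hu
        exact hsat w hw (SBJ.mem_Blk.2 hgw.symm)
      · exact fun hu => Finset.mem_image_of_mem g hu
  rw [← hbij, Finset.card_univ, Fintype.card_finset, Fintype.card_fin, hdim]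
  congr 1
  omega
end
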